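/- arXiv:2509.04726 — 3 statements merged into one kernel-verified Lean document; each statement's English description precedes it below -/
import Mathlib

section
/- Let P ⊆ ℝ^d be a rational polytope and let c ∈ ℤ^d be nonzero. Then the function n ↦ aw_c(nP) is eventually quasilinear in the integer dilation parameter n: there exist a positive integer D (one may take D = denom(P)), an integer N, and rational numbers a_0, …, a_{D−1}, b_0, …, b_{D−1} such that for every integer n ≥ N, aw_c(nP) = a_r·n + b_r, where r = n mod D. -/
open Pointwise

/-- The set of integer points of `K ⊆ ℝ^d`, as integer vectors. -/
def intPts {d : ℕ} (K : Set (Fin d → ℝ)) : Set (Fin d → ℤ) :=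
  {x | (fun i => (x i : ℝ)) ∈ K}

/-- The arithmetic range of `K` in direction `c`. -/
def AR {d : ℕ} (c : Fin d → ℤ) (K : Set (Fin d → ℝ)) : Set ℤ :=
  {n | ∃ x ∈ intPts K, n = ∑ i, c i * x i}

/-- The arithmetic width of `K` in direction `c`. -/
noncomputable def aw {d : ℕ} (c : Fin d → ℤ) (K : Set (Fin d → ℝ)) : ℕ :=
  (AR c K).ncard

/-- `P ⊆ ℝ^d` is a rational polytope: the convex hull of finitely many rational points. -/
def IsRatPolytope {d : ℕ} (P : Set (Fin d → ℝ)) : Prop :=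
  ∃ V : Finset (Fin d → ℚ), V.Nonempty ∧
    P = convexHull ℝ ((fun v : Fin d → ℚ => (fun i => ((v i : ℚ) : ℝ))) '' (V : Set (Fin d → ℚ)))

/-!
Write `S n` for the arithmetic range of `n • P` and let `D` clear the denominators of the
vertices `V` of `P`. A point of `(n + D) • P` with `n ≥ #V * D` gives weight at least `D` to some
vertex `v`; removing the integral point `D • v` leaves a point of `n • P`. With convexity this
gives `S (n + D) = S n + S D`, so along each residue class modulo `D` the ranges are iterated
sumsets `A + k • B` of finite sets of integers, and it suffices that `#(A + k • B)` is eventually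
linear in `k`.

For this translate `B` so that `min B = 0`, and let `M = max B`. As `k` grows, `A + k • B`
increases below any fixed level, and `(A + k • B) - k * M` increases above any fixed level, so
both ends stabilise. In between, by the Frobenius theorem for the monoid generated by `B`, the
set contains every integer congruent modulo `gcd B` to an element of `A`. Hence the step from
`k` to `k + 1` translates everything above a fixed level by `M`, and the increment
`#(A + (k + 1) • B) - #(A + k • B)` is eventually constant.
-/

open Finset

theorem AddSubmonoid.exists_mem_nsmul_of_mem_closure {M : Type*} [AddMonoid M] {s : Set M} {x : M}
    (hx : x ∈ closure s) : ∃ k : ℕ, x ∈ k • s := by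
  induction hx using closure_induction with
  | mem x hx => exact ⟨1, by simpa using hx⟩
  | zero => exact ⟨0, by simp⟩
  | add x y _ _ hx hy =>
    obtain ⟨j, hj⟩ := hx
    obtain ⟨k, hk⟩ := hy
    exact ⟨j + k, add_nsmul s j k ▸ Set.add_mem_add hj hk⟩

theorem Nat.exists_mem_nsmul_of_setGcd_dvd {s : Set ℕ} (h0 : 0 ∈ s) {b : ℕ} (hb : b ∈ s)
    (hb0 : 0 < b) :
    ∃ F K : ℕ, ∀ k y : ℕ, setGcd s ∣ y → F ≤ y → y + K * b ≤ k * b → y ∈ k • s := by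
  obtain ⟨F, hF⟩ := exists_mem_closure_of_ge s
  have hcl (y : ℕ) : ∃ k : ℕ, setGcd s ∣ y → F ≤ y → y ∈ k • s := by
    by_cases h : setGcd s ∣ y ∧ F ≤ y
    · obtain ⟨k, hk⟩ := AddSubmonoid.exists_mem_nsmul_of_mem_closure (hF y h.2 h.1)
      exact ⟨k, fun _ _ => hk⟩
    · exact ⟨0, fun h1 h2 => absurd ⟨h1, h2⟩ h⟩
  choose kf hkf using hcl
  -- Write `y = r + j * b` with `r ∈ [F, F + b)`; only finitely many `r` occur.
  refine ⟨F, (range (F + b)).sup kf, fun k y hdvd hFy hk => ?_⟩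
  set r := F + (y - F) % b
  set j := (y - F) / b
  have hy : y = r + j * b := by have := Nat.mod_add_div (y - F) b; grind
  have hr : r ∈ (range (F + b)).sup kf • s := by
    refine Set.nsmul_subset_nsmul_right h0 (le_sup (mem_range.2 ?_)) (hkf r ?_ (by omega))
    · have := Nat.mod_lt (y - F) hb0; omega
    · exact (Nat.dvd_add_left (dvd_mul_of_dvd_right (setGcd_dvd_of_mem hb) j)).1 (hy ▸ hdvd)
  have hjb : j * b ∈ j • s := by simpa using Set.nsmul_mem_nsmul (n := j) hb
  have hjk : (range (F + b)).sup kf + j ≤ k := by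
    have : j * b ≤ y := (Nat.div_mul_le_self _ _).trans (Nat.sub_le y F)
    exact Nat.le_of_mul_le_mul_right (by rw [add_mul]; omega) hb0
  rw [hy]
  exact Set.nsmul_subset_nsmul_right h0 hjk (add_nsmul s _ j ▸ Set.add_mem_add hr hjb)

theorem Finset.exists_forall_ge_eq_of_monotone {α : Type*} [DecidableEq α] {f : ℕ → Finset α}
    (hf : Monotone f) {S : Finset α} (hS : ∀ k, f k ⊆ S) : ∃ K, ∀ k ≥ K, f k = f K := by
  obtain ⟨K, hK⟩ := WellFoundedLT.antitone_chain_condition (f := fun k => S \ f k)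
    fun j k hjk => sdiff_subset_sdiff le_rfl (hf hjk)
  exact ⟨K, fun k hk => by
    rw [← sdiff_sdiff_eq_self (hS k), ← hK k hk, sdiff_sdiff_eq_self (hS K)]⟩

namespace Finset

variable {A B : Finset ℤ} {M : ℤ}

theorem exists_mem_nsmul_of_dvd (h0 : 0 ∈ B) (hB : ∀ b ∈ B, 0 ≤ b) (hM : M ∈ B) (hM0 : 0 < M) :
    ∃ (g : ℤ) (F K : ℕ), (∀ b ∈ B, g ∣ b) ∧
      ∀ (k : ℕ) (y : ℤ), g ∣ y → F ≤ y → y + K * M ≤ k * M → y ∈ k • B := by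
  set s : Set ℕ := {n | (n : ℤ) ∈ B}
  have hcast : Nat.cast '' s = (B : Set ℤ) := by
    ext b
    refine ⟨fun ⟨n, hn, hnb⟩ => hnb ▸ hn, fun hb => ⟨b.toNat, ?_, ?_⟩⟩ <;>
      simp_all [s, Int.toNat_of_nonneg (hB b hb)]
  obtain ⟨F, K, hFK⟩ := Nat.exists_mem_nsmul_of_setGcd_dvd (s := s) (by simpa [s] using h0)
    (b := M.toNat) (by simpa [s, hM0.le] using hM) (by omega)
  refine ⟨Nat.setGcd s, F, K, fun b hb => ?_, fun k y hdvd hFy hk => ?_⟩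
  · have : b.toNat ∈ s := by simpa [s, hB b hb] using hb
    simpa [hB b hb] using Int.natCast_dvd_natCast.2 (Nat.setGcd_dvd_of_mem this)
  · have hy : 0 ≤ y := by omega
    have hmem := hFK k y.toNat (Int.natCast_dvd_natCast.1 (by rwa [Int.toNat_of_nonneg hy]))
      (by omega) (by zify; rwa [Int.toNat_of_nonneg hy, Int.toNat_of_nonneg hM0.le])
    rw [← mem_coe, coe_nsmul, ← hcast, ← Int.toNat_of_nonneg hy]
    exact Set.image_nsmul (Nat.castAddMonoidHom ℤ) s k ▸ Set.mem_image_of_mem _ hmem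

theorem add_nsmul_subset_add_succ_nsmul (h0 : 0 ∈ B) (k : ℕ) : A + k • B ⊆ A + (k + 1) • B :=
  add_subset_add_left (nsmul_subset_nsmul_right h0 k.le_succ)

theorem add_mem_add_succ_nsmul (hM : M ∈ B) {k : ℕ} {x : ℤ} (hx : x ∈ A + k • B) :
    x + M ∈ A + (k + 1) • B := by
  rw [succ_nsmul, ← add_assoc]
  exact add_mem_add hx hM

theorem nonneg_of_mem_nsmul (hB : ∀ b ∈ B, 0 ≤ b) {k : ℕ} {y : ℤ} (hy : y ∈ k • B) : 0 ≤ y :=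
  AddSubmonoid.nsmul_subset (S := (Subsemiring.nonneg ℤ).toAddSubmonoid) (n := k) hB
    (by rwa [← coe_nsmul, mem_coe])

theorem dvd_of_mem_nsmul {g : ℤ} (hg : ∀ b ∈ B, g ∣ b) {k : ℕ} {y : ℤ} (hy : y ∈ k • B) :
    g ∣ y :=
  Int.mem_zmultiples_iff.1 <| AddSubmonoid.nsmul_subset
    (S := (AddSubgroup.zmultiples g).toAddSubmonoid) (n := k)
    (fun b hb => Int.mem_zmultiples_iff.2 (hg b hb)) (by rwa [← coe_nsmul, mem_coe])

theorem le_mul_of_mem_nsmul (hB : ∀ b ∈ B, b ≤ M) {k : ℕ} {y : ℤ} (hy : y ∈ k • B) :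
    y ≤ k * M := by
  induction k generalizing y with
  | zero => simp_all
  | succ k ih =>
    rw [succ_nsmul] at hy
    obtain ⟨z, hz, b, hb, rfl⟩ := mem_add.1 hy
    push_cast
    linarith [ih hz, hB b hb]

theorem filter_lt_add_nsmul_stabilizes (h0 : 0 ∈ B) (hB : ∀ b ∈ B, 0 ≤ b) (T : ℤ) :
    ∃ K : ℕ, ∀ k ≥ K, (A + k • B).filter (· < T) = (A + K • B).filter (· < T) := by
  obtain ⟨α, hα⟩ := A.bddBelow
  refine exists_forall_ge_eq_of_monotone (S := Ico α T)
    (monotone_nat_of_le_succ fun k => filter_subset_filter _ (add_nsmul_subset_add_succ_nsmul h0 k))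
    fun k x hx => ?_
  obtain ⟨hx, hxT⟩ := mem_filter.1 hx
  obtain ⟨a, ha, y, hy, rfl⟩ := mem_add.1 hx
  have := hα ha
  have := nonneg_of_mem_nsmul hB hy
  exact mem_Ico.2 ⟨by linarith, hxT⟩

theorem exists_sub_mem_add_nsmul_of_lt (hM : M ∈ B) (hBM : ∀ b ∈ B, b ≤ M) (V : ℤ) :
    ∃ K : ℕ, ∀ k ≥ K, ∀ y ∈ A + (k + 1) • B, V < y - (k + 1) * M → y - M ∈ A + k • B := by
  obtain ⟨β, hβ⟩ := A.bddAbove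
  set top : ℕ → Finset ℤ := fun k => ((A + k • B).image (· - k * M)).filter (V < ·)
  have hmono : Monotone top := monotone_nat_of_le_succ fun k y hy => by
    obtain ⟨hy, hVy⟩ := mem_filter.1 hy
    obtain ⟨x, hx, rfl⟩ := mem_image.1 hy
    exact mem_filter.2 ⟨mem_image.2 ⟨x + M, add_mem_add_succ_nsmul hM hx, by push_cast; ring⟩, hVy⟩
  have hbdd (k : ℕ) : top k ⊆ Ioc V β := fun y hy => by
    obtain ⟨hy, hVy⟩ := mem_filter.1 hy
    obtain ⟨x, hx, rfl⟩ := mem_image.1 hy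
    obtain ⟨a, ha, z, hz, rfl⟩ := mem_add.1 hx
    have := hβ ha
    have := le_mul_of_mem_nsmul hBM hz
    exact mem_Ioc.2 ⟨hVy, by linarith⟩
  obtain ⟨K, hK⟩ := exists_forall_ge_eq_of_monotone hmono hbdd
  refine ⟨K, fun k hk y hy hVy => ?_⟩
  have : y - (k + 1) * M ∈ top k := by
    rw [hK k hk, ← hK (k + 1) (by omega)]
    exact mem_filter.2 ⟨mem_image.2 ⟨y, hy, by push_cast; ring⟩, hVy⟩
  obtain ⟨x, hx, hxy⟩ := mem_image.1 (mem_filter.1 this).1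
  convert hx using 1
  linarith

theorem exists_card_add_succ_nsmul_eq_of_nonneg (h0 : 0 ∈ B) (hB : ∀ b ∈ B, 0 ≤ b) (hM : M ∈ B)
    (hBM : ∀ b ∈ B, b ≤ M) (hM0 : 0 < M) :
    ∃ (K : ℕ) (δ : ℤ), ∀ k ≥ K, (#(A + (k + 1) • B) : ℤ) = #(A + k • B) + δ := by
  obtain ⟨g, F, K0, hg, hfull⟩ := exists_mem_nsmul_of_dvd h0 hB hM hM0
  obtain ⟨α, hα⟩ := A.bddBelow
  obtain ⟨β, hβ⟩ := A.bddAbove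
  set L := β + F
  set V := α - K0 * M
  obtain ⟨K1, hK1⟩ := filter_lt_add_nsmul_stabilizes (A := A) h0 hB L
  obtain ⟨K2, hK2⟩ := filter_lt_add_nsmul_stabilizes (A := A) h0 hB (L + M)
  obtain ⟨K3, hK3⟩ := exists_sub_mem_add_nsmul_of_lt (A := A) hM hBM V
  -- Above `L + M` the step from `k` to `k + 1` is a translation by `M`: near the top by the
  -- stabilisation `hK3`, lower down because `hfull` fills every admissible residue class.
  have hshift (k : ℕ) (hk : K3 ≤ k) : (A + (k + 1) • B).filter (fun y => ¬ y < L + M) =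
      ((A + k • B).filter (fun x => ¬ x < L)).map (addRightEmbedding M) := by
    ext y
    simp only [mem_filter, mem_map, addRightEmbedding_apply, not_lt]
    constructor
    · rintro ⟨hy, hLy⟩
      refine ⟨y - M, ⟨?_, by linarith⟩, by ring⟩
      by_cases hVy : V < y - (k + 1) * M
      · exact hK3 k hk y hy hVy
      obtain ⟨a, ha, z, hz, rfl⟩ := mem_add.1 hy
      have := hα ha
      have := hβ ha
      rw [add_sub_assoc]
      refine add_mem_add ha (hfull k _ (dvd_sub (dvd_of_mem_nsmul hg hz) (hg M hM)) ?_ ?_) <;>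
        linarith
    · rintro ⟨x, ⟨hx, hLx⟩, rfl⟩
      exact ⟨add_mem_add_succ_nsmul hM hx, by linarith⟩
  refine ⟨max K1 (max K2 K3),
    #((A + K2 • B).filter (· < L + M)) - #((A + K1 • B).filter (· < L)), fun k hk => ?_⟩
  have e1 := card_filter_add_card_filter_not (s := A + (k + 1) • B) (· < L + M)
  have e2 := card_filter_add_card_filter_not (s := A + k • B) (· < L)
  rw [hshift k (by omega), card_map, hK2 (k + 1) (by omega)] at e1
  rw [hK1 k (by omega)] at e2
  omega

theorem nsmul_vadd_finset (t : ℤ) (B : Finset ℤ) (k : ℕ) : k • (t +ᵥ B) = (k • t) +ᵥ k • B := by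
  induction k with
  | zero => simp
  | succ k ih => rw [succ_nsmul, ih, vadd_add_vadd_comm, succ_nsmul, succ_nsmul]

theorem exists_card_add_succ_nsmul_eq (A B : Finset ℤ) :
    ∃ (K : ℕ) (δ : ℤ), ∀ k ≥ K, (#(A + (k + 1) • B) : ℤ) = #(A + k • B) + δ := by
  rcases B.eq_empty_or_nonempty with rfl | hB
  · exact ⟨1, 0, fun k hk => by simp [nsmul_empty (show k ≠ 0 by omega)]⟩
  set m := B.min' hB
  set B' := (-m) +ᵥ B
  have hcard (k : ℕ) : #(A + k • B) = #(A + k • B') := by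
    rw [show B = m +ᵥ B' by simp [B', vadd_vadd], nsmul_vadd_finset, add_vadd_comm,
      card_vadd_finset]
  simp only [hcard]
  have h0 : 0 ∈ B' := mem_vadd_finset.2 ⟨m, min'_mem B hB, by simp⟩
  have hB' : ∀ b ∈ B', 0 ≤ b := fun b hb => by
    obtain ⟨b₀, hb₀, rfl⟩ := mem_vadd_finset.1 hb
    have := B.min'_le b₀ hb₀
    rw [vadd_eq_add]
    linarith
  set M := B'.max' ⟨0, h0⟩
  rcases (hB' M (max'_mem _ _)).eq_or_lt with hM0 | hM0
  · have : B' = 0 := eq_singleton_iff_unique_mem.2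
      ⟨h0, fun b hb => le_antisymm (hM0 ▸ le_max' _ b hb) (hB' b hb)⟩
    exact ⟨0, 0, fun k _ => by rw [this, succ_nsmul, add_zero, add_zero]⟩
  · exact exists_card_add_succ_nsmul_eq_of_nonneg h0 hB' (max'_mem _ _)
      (fun b hb => le_max' _ b hb) hM0

end Finset

theorem exists_eq_mul_add_of_succ_eq_add {u : ℕ → ℤ} {K : ℕ} {δ : ℤ}
    (h : ∀ k ≥ K, u (k + 1) = u k + δ) : ∀ k ≥ K, (u k : ℚ) = δ * k + (u K - δ * K) := by
  intro k hk
  induction k, hk using Nat.le_induction with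
  | base => ring
  | succ k hk ih => rw [h k hk]; push_cast; rw [ih]; ring

theorem Set.Finite.exists_ncard_add_nsmul_eq {A B : Set ℤ} (hA : A.Finite) (hB : B.Finite) :
    ∃ (K : ℕ) (a b : ℚ), ∀ k ≥ K, ((A + k • B).ncard : ℚ) = a * k + b := by
  obtain ⟨K, δ, hKδ⟩ := Finset.exists_card_add_succ_nsmul_eq hA.toFinset hB.toFinset
  set u : ℕ → ℤ := fun k => #(hA.toFinset + k • hB.toFinset)
  refine ⟨K, δ, u K - δ * K, fun k hk => ?_⟩
  rw [← hA.coe_toFinset, ← hB.coe_toFinset, ← Finset.coe_nsmul, ← Finset.coe_add,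
    ncard_coe_finset]
  exact_mod_cast exists_eq_mul_add_of_succ_eq_add (u := u) hKδ k hk

theorem eq_add_nsmul_of_forall_ge {α : Type*} [AddMonoid α] {S : ℕ → α} {D n₀ : ℕ}
    (h : ∀ n ≥ n₀, S (n + D) = S n + S D) : ∀ n ≥ n₀, ∀ k, S (n + k * D) = S n + k • S D := by
  intro n hn k
  induction k with
  | zero => simp
  | succ k ih =>
    rw [add_mul, one_mul, ← add_assoc, h _ (by omega), ih, succ_nsmul, add_assoc]

theorem exists_eq_quasilinear_of_forall_residue {f : ℕ → ℚ} {D : ℕ} (hD : 0 < D)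
    (h : ∀ r < D, ∃ (K : ℕ) (a b : ℚ), ∀ k ≥ K, f (r + k * D) = a * k + b) :
    ∃ (N : ℕ) (a b : ℕ → ℚ), ∀ n ≥ N, f n = a (n % D) * n + b (n % D) := by
  choose! K a b hab using h
  refine ⟨D * (range D).sup K, fun r => a r / D, fun r => b r - a r * r / D, fun n hn => ?_⟩
  obtain ⟨r, q, hr, rfl⟩ : ∃ r q, r < D ∧ n = r + q * D :=
    ⟨n % D, n / D, Nat.mod_lt n hD, (Nat.mod_add_div' n D).symm⟩
  have hq : K r ≤ q := by
    have : (range D).sup K * D < (q + 1) * D := by linarith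
    exact (le_sup (mem_range.2 hr)).trans (Nat.le_of_lt_succ (Nat.lt_of_mul_lt_mul_right this))
  rw [Nat.add_mul_mod_self_right, Nat.mod_eq_of_lt hr, hab r hr q hq]
  push_cast
  field_simp
  ring

theorem Finset.exists_pos_nat_mul_eq_intCast {ι : Type*} (s : Finset ι) (q : ι → ℚ) :
    ∃ D : ℕ, 0 < D ∧ ∀ i ∈ s, ∃ z : ℤ, (z : ℚ) = D * q i := by
  refine ⟨∏ i ∈ s, (q i).den, prod_pos fun i _ => (q i).den_pos, fun i hi => ?_⟩
  obtain ⟨e, he⟩ := dvd_prod_of_mem (fun i => (q i).den) hi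
  refine ⟨(q i).num * e, ?_⟩
  rw [he]
  push_cast
  rw [← Rat.mul_den_eq_num]
  ring

theorem exists_pos_nat_smul_eq_intCast {d : ℕ} (V : Finset (Fin d → ℚ)) :
    ∃ D : ℕ, 0 < D ∧ ∀ v ∈ V, ∃ z : Fin d → ℤ,
      (fun i => (z i : ℝ)) = (D : ℝ) • fun i => ((v i : ℚ) : ℝ) := by
  obtain ⟨D, hD0, hD⟩ := (V ×ˢ univ).exists_pos_nat_mul_eq_intCast fun p => p.1 p.2
  refine ⟨D, hD0, fun v hv => ?_⟩
  choose z hz using fun i => hD (v, i) (mem_product.2 ⟨hv, mem_univ i⟩)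
  exact ⟨z, funext fun i => by simpa using congrArg ((↑) : ℚ → ℝ) (hz i)⟩

theorem exists_sub_smul_mem_smul_convexHull {𝕜 E : Type*} [Field 𝕜] [LinearOrder 𝕜]
    [IsStrictOrderedRing 𝕜] [AddCommGroup E] [Module 𝕜 E] {W : Finset E} {s t : 𝕜} (hs : 0 < s)
    (hst : #W * s < t) {x : E} (hx : x ∈ t • convexHull 𝕜 (W : Set E)) :
    ∃ w ∈ W, x - s • w ∈ (t - s) • convexHull 𝕜 (W : Set E) := by
  classical
  have ht : 0 < t := lt_of_le_of_lt (by positivity) hst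
  obtain ⟨p, hp, rfl⟩ := hx
  obtain ⟨l, hl0, hl1, hlp⟩ := Finset.mem_convexHull'.1 hp
  have hW : W.Nonempty := nonempty_of_sum_ne_zero (hl1 ▸ one_ne_zero)
  obtain ⟨w, hw, hsw⟩ : ∃ w ∈ W, s ≤ t * l w := exists_le_of_sum_le hW (by
    rw [sum_const, nsmul_eq_mul, ← mul_sum, hl1, mul_one]; exact hst.le)
  set μ : E → 𝕜 := fun u => t * l u - if u = w then s else 0
  have hμ0 : ∀ u ∈ W, 0 ≤ μ u := fun u hu => by
    by_cases h : u = w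
    · simp [μ, h, hsw]
    · simpa [μ, h] using mul_nonneg ht.le (hl0 u hu)
  have hμ1 : ∑ u ∈ W, μ u = t - s := by simp [μ, sum_sub_distrib, ← mul_sum, hl1, hw]
  have hμx : ∑ u ∈ W, μ u • u = t • p - s • w := by
    simp [μ, sub_smul, sum_sub_distrib, mul_smul, ← smul_sum, hlp, ite_smul, hw]
  have hts : 0 < t - s := by
    have : (1 : 𝕜) ≤ #W := by exact_mod_cast hW.card_pos
    nlinarith
  refine ⟨w, hw, W.centerMass μ id,
    W.centerMass_mem_convexHull hμ0 (hμ1 ▸ hts) fun u hu => hu, ?_⟩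
  simp only [Finset.centerMass, hμ1, smul_smul, mul_inv_cancel₀ hts.ne', one_smul, id, hμx]

section ArithmeticRange

variable {d : ℕ}

theorem mem_intPts {K : Set (Fin d → ℝ)} {x : Fin d → ℤ} :
    x ∈ intPts K ↔ (fun i => (x i : ℝ)) ∈ K := Iff.rfl

theorem AR_add_subset (c : Fin d → ℤ) (K L : Set (Fin d → ℝ)) :
    AR c K + AR c L ⊆ AR c (K + L) := by
  rintro _ ⟨_, ⟨x, hx, rfl⟩, _, ⟨y, hy, rfl⟩, rfl⟩
  refine ⟨x + y, ?_, by simp only [Pi.add_apply, mul_add, sum_add_distrib]⟩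
  rw [mem_intPts] at hx hy ⊢
  convert Set.add_mem_add hx hy using 1
  ext i
  simp

theorem IsCompact.finite_AR (c : Fin d → ℤ) {K : Set (Fin d → ℝ)} (hK : IsCompact K) :
    (AR c K).Finite := by
  have hint : (intPts K).Finite :=
    ((Topology.IsClosedEmbedding.piMap fun _ => Int.isClosedEmbedding_coe_real).isProperMap
      |>.isCompact_preimage hK).finite_of_discrete
  exact (hint.image fun x => ∑ i, c i * x i).subset fun _ ⟨x, hx, hm⟩ => ⟨x, hx, hm.symm⟩

theorem AR_add_smul_convexHull_eq (c : Fin d → ℤ) {W : Finset (Fin d → ℝ)} {D : ℕ} (hD0 : 0 < D)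
    (hD : ∀ w ∈ W, ∃ z : Fin d → ℤ, (fun i => (z i : ℝ)) = (D : ℝ) • w) {n : ℕ}
    (hn : #W * D ≤ n) :
    AR c (((n + D : ℕ) : ℝ) • convexHull ℝ (W : Set (Fin d → ℝ))) =
      AR c ((n : ℝ) • convexHull ℝ (W : Set (Fin d → ℝ))) +
        AR c ((D : ℝ) • convexHull ℝ (W : Set (Fin d → ℝ))) := by
  refine subset_antisymm ?_ ?_
  · rintro _ ⟨x, hx, rfl⟩
    obtain ⟨w, hw, hxw⟩ := exists_sub_smul_mem_smul_convexHull (W := W) (s := (D : ℝ))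
      (by exact_mod_cast hD0) (by push_cast; exact_mod_cast (by omega : #W * D < n + D)) hx
    obtain ⟨z, hz⟩ := hD w hw
    refine ⟨_, ⟨x - z, ?_, rfl⟩, _, ⟨z, ?_, rfl⟩, by simp [mul_sub, sum_sub_distrib]⟩
    · have hxz : (fun i => ((x - z) i : ℝ)) = (fun i => (x i : ℝ)) - (D : ℝ) • w := by
        rw [← hz]
        ext i
        simp
      rw [mem_intPts, hxz]
      simpa using hxw
    · rw [mem_intPts, hz]
      exact Set.smul_mem_smul_set (subset_convexHull ℝ _ hw)
  · rw [Nat.cast_add, (convex_convexHull ℝ _).add_smul (Nat.cast_nonneg n) (Nat.cast_nonneg D)]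
    exact AR_add_subset c _ _

end ArithmeticRange

theorem aw_fixed_direction_eventually_quasilinear_general {d : ℕ} (P : Set (Fin d → ℝ))
    (hP : IsRatPolytope P) (c : Fin d → ℤ) :
    ∃ (D : ℕ), 0 < D ∧ ∃ (N : ℕ) (a b : ℕ → ℚ),
      ∀ n : ℕ, N ≤ n →
        (aw c ((n : ℝ) • P) : ℚ) = a (n % D) * (n : ℚ) + b (n % D) := by
  obtain ⟨V, -, rfl⟩ := hP
  obtain ⟨D, hD0, hD⟩ := exists_pos_nat_smul_eq_intCast V
  rw [← coe_image]
  set W := V.image fun v : Fin d → ℚ => fun i => ((v i : ℚ) : ℝ)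
  have hW : ∀ w ∈ W, ∃ z : Fin d → ℤ, (fun i => (z i : ℝ)) = (D : ℝ) • w := by
    simpa [W] using hD
  set S : ℕ → Set ℤ := fun n => AR c ((n : ℝ) • convexHull ℝ (W : Set (Fin d → ℝ)))
  have hfin (n : ℕ) : (S n).Finite :=
    ((W.finite_toSet.isCompact_convexHull ℝ).smul (n : ℝ)).finite_AR c
  have hiter := eq_add_nsmul_of_forall_ge (S := S) fun n hn => AR_add_smul_convexHull_eq c hD0 hW hn
  refine ⟨D, hD0, exists_eq_quasilinear_of_forall_residue hD0 fun r _ => ?_⟩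
  obtain ⟨K, a, b, hab⟩ := (hfin (r + #W * D)).exists_ncard_add_nsmul_eq (hfin D)
  refine ⟨K + #W, a, b - a * #W, fun k hk => ?_⟩
  have hk' : r + k * D = r + #W * D + (k - #W) * D := by
    rw [add_assoc, ← add_mul, Nat.add_sub_cancel' (by omega)]
  change ((S (r + k * D)).ncard : ℚ) = _
  rw [hk', hiter _ (by omega), hab _ (by omega), Nat.cast_sub (by omega)]
  ring

/-- for a rational polytope `P` and fixed nonzero `c ∈ ℤ^d`, the function
`n ↦ aw_c(nP)` is eventually quasilinear: there are `D > 0`, a threshold `N`, and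
rationals `a_r, b_r` for `r = 0, …, D−1` with `aw_c(nP) = a_{n mod D}·n + b_{n mod D}`
for all `n ≥ N`. -/
theorem aw_fixed_direction_eventually_quasilinear {d : ℕ} (P : Set (Fin d → ℝ))
    (hP : IsRatPolytope P) (c : Fin d → ℤ) (hc : c ≠ 0) :
    ∃ (D : ℕ), 0 < D ∧ ∃ (N : ℕ) (a b : ℕ → ℚ),
      ∀ n : ℕ, N ≤ n →
        (aw c ((n : ℝ) • P) : ℚ) = a (n % D) * (n : ℚ) + b (n % D) :=
  aw_fixed_direction_eventually_quasilinear_general P hP c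
end

section
/- Let P ⊆ ℝ^d be a rational polytope with denominator D, let c ∈ ℤ^d be nonzero, let V be the linear span of P − P, and let λ ∈ ℤ_{≥0} be the nonnegative generator of the subgroup { c·w : w ∈ V ∩ ℤ^d } of ℤ. Then for all sufficiently large integers n for which the affine span of nP contains a point of ℤ^d, the sets AR_c(nP) and AR_c((n+D)P) are nonempty, each is contained in a single residue class modulo λ, and |gaps_λ(AR_c(nP))| = |gaps_λ(AR_c((n+D)P))|. -/
/-!
Write `D • P` as the lattice polytope `Q = conv T`, so that `n • P = r • Q` and
`(n + D) • P = (r + 1) • Q` with `r = n / D`, and let `μ ≤ ν` be the extreme values of `c` on `T`.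
Lattice points are produced by rounding: a box spanned by integer vectors of the direction space
fits into `r • Q` around `r • barycenter` once `r` is large. Rounding in a box of directions in
`ker c` shows that, for `λ > 0`, every value of the right class modulo `λ` at distance at least
some `C` from `r μ` and `r ν` is attained on `r • Q`. Near the lower end, a lattice point of
`(r + 1) • Q` puts weight at least `1` on a vertex `t₀` minimising `c`, and subtracting `t₀` lands
in `r • Q`; adding `t₀` goes back. So `AR_c ((r + 1) • Q)` is `AR_c (r • Q)` with its lower end
translated by `μ` and its upper end by `ν`, and translating the gaps accordingly is a bijection.
-/

open Pointwise

/-- `Q ⊆ ℝ^d` is an integral polytope: the convex hull of finitely many integer points. -/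
def IsIntPolytope {d : ℕ} (Q : Set (Fin d → ℝ)) : Prop :=
  ∃ V : Finset (Fin d → ℤ), V.Nonempty ∧
    Q = convexHull ℝ ((fun v : Fin d → ℤ => (fun i => ((v i : ℤ) : ℝ))) '' (V : Set (Fin d → ℤ)))

/-- `D` is the denominator of `P`: the least positive integer such that `DP` is integral. -/
def IsDenom {d : ℕ} (P : Set (Fin d → ℝ)) (D : ℕ) : Prop :=
  0 < D ∧ IsIntPolytope ((D : ℝ) • P) ∧
    ∀ D' : ℕ, 0 < D' → IsIntPolytope ((D' : ℝ) • P) → D ≤ D'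

/-- The gaps of a set `S ⊆ ℤ` relative to step size `λ`: elements of the arithmetic
progression of step `λ` from `min S` to `max S` that are missing from `S`. -/
noncomputable def gapsOf (lam : ℕ) (S : Set ℤ) : Set ℤ :=
  {j : ℤ | sInf S ≤ j ∧ j ≤ sSup S ∧ (lam : ℤ) ∣ j - sInf S} \ S

namespace ArithRange

open Filter Matrix

section Gaps

lemma mem_gapsOf {lam : ℕ} {S : Set ℤ} {j : ℤ} :
    j ∈ gapsOf lam S ↔ (sInf S ≤ j ∧ j ≤ sSup S ∧ (lam : ℤ) ∣ j - sInf S) ∧ j ∉ S :=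
  Iff.rfl

lemma gapsOf_zero_eq_empty {S : Set ℤ} (hS : S.Nonempty) (hb : BddBelow S) :
    gapsOf 0 S = ∅ := by
  ext j
  simp only [mem_gapsOf, Nat.cast_zero, zero_dvd_iff, sub_eq_zero, Set.mem_empty_iff_false,
    iff_false, not_and, not_not]
  rintro ⟨-, -, rfl⟩
  exact Int.csInf_mem hS hb

lemma exists_mem_Icc_dvd_sub {lam : ℕ} (hlam : 0 < lam) {L H : ℤ} (hLH : L + lam ≤ H + 1)
    (j : ℤ) : ∃ a, L ≤ a ∧ a ≤ H ∧ (lam : ℤ) ∣ a - j := by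
  have h₀ := Int.emod_nonneg (j - L) (by omega : (lam : ℤ) ≠ 0)
  have h₁ := Int.emod_lt_of_pos (j - L) (by omega : (0 : ℤ) < lam)
  exact ⟨L + (j - L) % lam, by omega, by omega, ⟨-((j - L) / lam), by rw [Int.emod_def]; ring⟩⟩

/-- `B` is obtained from `A` by translating its lower end by `m₀` and its upper end by `m₁`,
while `A` contains the whole class of `a₀` modulo `λ` in the middle window `[L, H]`. -/
structure EndShift (lam : ℕ) (A B : Set ℤ) (a₀ L H m₀ m₁ : ℤ) : Prop where
  bddBelow_left : BddBelow A
  bddAbove_left : BddAbove A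
  bddBelow_right : BddBelow B
  bddAbove_right : BddAbove B
  mem : a₀ ∈ A
  le_mem : L ≤ a₀
  mem_le : a₀ ≤ H
  dvd_left : ∀ j ∈ A, (lam : ℤ) ∣ j - a₀
  dvd_right : ∀ j ∈ B, (lam : ℤ) ∣ j - (a₀ + m₀)
  mem_of_dvd : ∀ j, L ≤ j → j ≤ H → (lam : ℤ) ∣ j - a₀ → j ∈ A
  shift_le : m₀ ≤ m₁
  overlap : L + m₁ ≤ H + m₀
  dvd_shift : (lam : ℤ) ∣ m₁ - m₀
  add_mem₀ : ∀ j ∈ A, j + m₀ ∈ B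
  add_mem₁ : ∀ j ∈ A, j + m₁ ∈ B
  sub_mem₀ : ∀ j ∈ B, j ≤ L + m₀ → j - m₀ ∈ A
  sub_mem₁ : ∀ j ∈ B, H + m₁ ≤ j → j - m₁ ∈ A

namespace EndShift

def shiftMap (H m₀ m₁ j : ℤ) : ℤ := if j ≤ H then j + m₀ else j + m₁

variable {lam : ℕ} {A B : Set ℤ} {a₀ L H m₀ m₁ : ℤ}

lemma sub_mem_of_le (h : EndShift lam A B a₀ L H m₀ m₁) {j : ℤ} (hj : j ∈ B)
    (hjH : j ≤ H + m₀) : j - m₀ ∈ A := by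
  by_cases hjL : j ≤ L + m₀
  · exact h.sub_mem₀ j hj hjL
  · refine h.mem_of_dvd _ (by omega) (by omega) ?_
    rw [sub_sub, add_comm m₀]
    exact h.dvd_right j hj

lemma sub_mem_of_ge (h : EndShift lam A B a₀ L H m₀ m₁) {j : ℤ} (hj : j ∈ B)
    (hjL : L + m₁ ≤ j) : j - m₁ ∈ A := by
  by_cases hjH : H + m₁ ≤ j
  · exact h.sub_mem₁ j hj hjH
  · refine h.mem_of_dvd _ (by omega) (by omega) ?_
    rw [show j - m₁ - a₀ = (j - (a₀ + m₀)) - (m₁ - m₀) by ring]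
    exact dvd_sub (h.dvd_right j hj) h.dvd_shift

lemma sInf_eq (h : EndShift lam A B a₀ L H m₀ m₁) : sInf B = sInf A + m₀ := by
  have hA := Int.csInf_mem ⟨a₀, h.mem⟩ h.bddBelow_left
  have hB := Int.csInf_mem ⟨a₀ + m₀, h.add_mem₀ a₀ h.mem⟩ h.bddBelow_right
  have h₁ := csInf_le h.bddBelow_right (h.add_mem₀ _ hA)
  have h₂ := csInf_le h.bddBelow_left h.mem
  have h₃ := csInf_le h.bddBelow_left (h.sub_mem_of_le hB (by have := h.mem_le; omega))
  omega

lemma sSup_eq (h : EndShift lam A B a₀ L H m₀ m₁) : sSup B = sSup A + m₁ := by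
  have hA := Int.csSup_mem ⟨a₀, h.mem⟩ h.bddAbove_left
  have hB := Int.csSup_mem ⟨a₀ + m₁, h.add_mem₁ a₀ h.mem⟩ h.bddAbove_right
  have h₁ := le_csSup h.bddAbove_right (h.add_mem₁ _ hA)
  have h₂ := le_csSup h.bddAbove_left h.mem
  have h₃ := le_csSup h.bddAbove_left (h.sub_mem_of_ge hB (by have := h.le_mem; omega))
  omega

lemma dvd_sub_sInf_iff (h : EndShift lam A B a₀ L H m₀ m₁) {j : ℤ} :
    (lam : ℤ) ∣ j - sInf A ↔ (lam : ℤ) ∣ j - a₀ := by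
  have hs := h.dvd_left _ (Int.csInf_mem ⟨a₀, h.mem⟩ h.bddBelow_left)
  exact ⟨fun hd => sub_add_sub_cancel j (sInf A) a₀ ▸ dvd_add hd hs,
    fun hd => sub_sub_sub_cancel_right j (sInf A) a₀ ▸ dvd_sub hd hs⟩

lemma lt_or_lt_of_mem_gapsOf (h : EndShift lam A B a₀ L H m₀ m₁) {j : ℤ}
    (hj : j ∈ gapsOf lam A) : j < L ∨ H < j := by
  by_contra! hLH
  exact hj.2 (h.mem_of_dvd j hLH.1 hLH.2 (h.dvd_sub_sInf_iff.mp hj.1.2.2))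

lemma shiftMap_mem_gapsOf (h : EndShift lam A B a₀ L H m₀ m₁) {j : ℤ}
    (hj : j ∈ gapsOf lam A) : shiftMap H m₀ m₁ j ∈ gapsOf lam B := by
  have hside := h.lt_or_lt_of_mem_gapsOf hj
  obtain ⟨⟨hj₁, hj₂, hj₃⟩, hj₄⟩ := hj
  have := h.shift_le
  have := h.le_mem
  have := h.mem_le
  rcases hside with hjL | hjH
  · have hB := le_csSup h.bddAbove_right
      (h.add_mem₀ _ (Int.csSup_mem ⟨a₀, h.mem⟩ h.bddAbove_left))
    rw [shiftMap, if_pos (by omega)]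
    refine ⟨⟨by rw [h.sInf_eq]; omega, by omega, by rwa [h.sInf_eq, add_sub_add_right_eq_sub]⟩,
      fun hjB => hj₄ (by simpa using h.sub_mem_of_le hjB (by omega))⟩
  · rw [shiftMap, if_neg (by omega)]
    refine ⟨⟨by rw [h.sInf_eq]; omega, by rw [h.sSup_eq]; omega, ?_⟩,
      fun hjB => hj₄ (by simpa using h.sub_mem_of_ge hjB (by omega))⟩
    rw [h.sInf_eq, show j + m₁ - (sInf A + m₀) = (j - sInf A) + (m₁ - m₀) by ring]
    exact dvd_add hj₃ h.dvd_shift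

lemma injOn_shiftMap (h : EndShift lam A B a₀ L H m₀ m₁) :
    Set.InjOn (shiftMap H m₀ m₁) (gapsOf lam A) := by
  intro j hj j' hj' heq
  have := h.lt_or_lt_of_mem_gapsOf hj
  have := h.lt_or_lt_of_mem_gapsOf hj'
  have := h.shift_le
  simp only [shiftMap] at heq
  split_ifs at heq <;> omega

lemma exists_shiftMap_eq (h : EndShift lam A B a₀ L H m₀ m₁) {j' : ℤ}
    (hj' : j' ∈ gapsOf lam B) : ∃ j ∈ gapsOf lam A, shiftMap H m₀ m₁ j = j' := by
  obtain ⟨⟨hj₁, hj₂, hj₃⟩, hj₄⟩ := hj'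
  rw [h.sInf_eq] at hj₁ hj₃
  rw [h.sSup_eq] at hj₂
  have hinf := csInf_le h.bddBelow_left h.mem
  have hsup := le_csSup h.bddAbove_left h.mem
  have := h.overlap
  have := h.le_mem
  have := h.mem_le
  have hres : (lam : ℤ) ∣ j' - m₀ - a₀ := by
    rw [← h.dvd_sub_sInf_iff, sub_sub, add_comm m₀]
    exact hj₃
  by_cases hj'H : j' ≤ H + m₀
  · have hjA : j' - m₀ ∉ A := fun hA => hj₄ (by simpa using h.add_mem₀ _ hA)
    have hjL : j' - m₀ < L := by
      by_contra hjL
      exact hjA (h.mem_of_dvd _ (by omega) (by omega) hres)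
    refine ⟨j' - m₀, ⟨⟨by omega, by omega, by rwa [sub_sub, add_comm m₀]⟩, hjA⟩, ?_⟩
    rw [shiftMap, if_pos (by omega), sub_add_cancel]
  · have hjA : j' - m₁ ∉ A := fun hA => hj₄ (by simpa using h.add_mem₁ _ hA)
    have hres' : (lam : ℤ) ∣ j' - m₁ - a₀ := by
      rw [show j' - m₁ - a₀ = (j' - m₀ - a₀) - (m₁ - m₀) by ring]
      exact dvd_sub hres h.dvd_shift
    have hjH : H < j' - m₁ := by
      by_contra hjH
      exact hjA (h.mem_of_dvd _ (by omega) (by omega) hres')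
    refine ⟨j' - m₁, ⟨⟨by omega, by omega, h.dvd_sub_sInf_iff.mpr hres'⟩, hjA⟩, ?_⟩
    rw [shiftMap, if_neg (by omega), sub_add_cancel]

theorem ncard_gapsOf_eq (h : EndShift lam A B a₀ L H m₀ m₁) :
    (gapsOf lam A).ncard = (gapsOf lam B).ncard :=
  Set.ncard_congr (fun j _ => shiftMap H m₀ m₁ j) (fun _ hj => h.shiftMap_mem_gapsOf hj)
    (fun _ _ hj hj' => h.injOn_shiftMap hj hj') fun _ hj' => by
      obtain ⟨j, hj, e⟩ := h.exists_shiftMap_eq hj'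
      exact ⟨j, hj, e⟩

end EndShift

end Gaps

section ConvexGeometry

variable {E : Type*} [AddCommGroup E] [Module ℝ E]

lemma vectorSpan_smul_le (r : ℝ) (s : Set E) : vectorSpan ℝ (r • s) ≤ vectorSpan ℝ s := by
  rw [vectorSpan_def, Submodule.span_le]
  rintro _ ⟨_, ⟨x, hx, rfl⟩, _, ⟨y, hy, rfl⟩, rfl⟩
  change r • x - r • y ∈ _
  rw [← smul_sub]
  exact Submodule.smul_mem _ r (vsub_mem_vectorSpan ℝ hx hy)

lemma vectorSpan_smul {r : ℝ} (hr : r ≠ 0) (s : Set E) : vectorSpan ℝ (r • s) = vectorSpan ℝ s := by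
  refine (vectorSpan_smul_le r s).antisymm ?_
  simpa only [inv_smul_smul₀ hr] using vectorSpan_smul_le r⁻¹ (r • s)

lemma vectorSpan_convexHull (s : Set E) : vectorSpan ℝ (convexHull ℝ s) = vectorSpan ℝ s := by
  rw [← direction_affineSpan, affineSpan_convexHull, direction_affineSpan]

lemma add_mem_smul_of_convex {K : Set E} (hK : Convex ℝ K) {r s : ℝ} (hr : 0 ≤ r) (hs : 0 ≤ s)
    {x y : E} (hx : x ∈ r • K) (hy : y ∈ s • K) : x + y ∈ (r + s) • K := by
  rw [hK.add_smul hr hs]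
  exact Set.add_mem_add hx hy

lemma mem_smul_convexHull_iff {U : Finset E} {r : ℝ} (hr : 0 < r) {x : E} :
    x ∈ r • convexHull ℝ (U : Set E) ↔
      ∃ a : E → ℝ, (∀ y ∈ U, 0 ≤ a y) ∧ ∑ y ∈ U, a y = r ∧ ∑ y ∈ U, a y • y = x := by
  rw [Set.mem_smul_set]
  constructor
  · rintro ⟨p, hp, rfl⟩
    obtain ⟨w, hw0, hw1, rfl⟩ := Finset.mem_convexHull'.mp hp
    refine ⟨fun y => r * w y, fun y hy => mul_nonneg hr.le (hw0 y hy), ?_, ?_⟩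
    · rw [← Finset.mul_sum, hw1, mul_one]
    · simp only [Finset.smul_sum, smul_smul]
  · rintro ⟨a, ha0, ha1, rfl⟩
    refine ⟨∑ y ∈ U, (a y / r) • y, Finset.mem_convexHull'.mpr
      ⟨fun y => a y / r, fun y hy => div_nonneg (ha0 y hy) hr.le, ?_, rfl⟩, ?_⟩
    · rw [← Finset.sum_div, ha1, div_self hr.ne']
    · simp only [Finset.smul_sum, smul_smul, mul_div_cancel₀ _ hr.ne']

lemma le_apply_of_mem_smul_convexHull (f : E →ₗ[ℝ] ℝ) {U : Set E} {m : ℝ}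
    (hm : ∀ y ∈ U, m ≤ f y) {r : ℝ} (hr : 0 ≤ r) {x : E} (hx : x ∈ r • convexHull ℝ U) :
    r * m ≤ f x := by
  obtain ⟨p, hp, rfl⟩ := hx
  have hpm : m ≤ f p := convexHull_min hm (convex_halfSpace_ge f.isLinear m) hp
  rw [map_smul, smul_eq_mul]
  exact mul_le_mul_of_nonneg_left hpm hr

lemma exists_weights_of_mem_vectorSpan {U : Finset E} {v : E}
    (hv : v ∈ vectorSpan ℝ (U : Set E)) :
    ∃ w : E → ℝ, ∑ y ∈ U, w y = 0 ∧ ∑ y ∈ U, w y • y = v := by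
  classical
  rw [vectorSpan_def] at hv
  induction hv using Submodule.span_induction with
  | mem _ h =>
    obtain ⟨y₁, hy₁ : y₁ ∈ U, y₂, hy₂ : y₂ ∈ U, rfl⟩ := h
    refine ⟨Pi.single y₁ 1 - Pi.single y₂ 1, ?_, ?_⟩
    · simp [Finset.sum_sub_distrib, Finset.sum_pi_single', hy₁, hy₂]
    · simp [sub_smul, Finset.sum_sub_distrib, Pi.single_apply, hy₁, hy₂]
  | zero => exact ⟨0, by simp, by simp⟩
  | add _ _ _ _ h₁ h₂ =>
    obtain ⟨w₁, hw₁, rfl⟩ := h₁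
    obtain ⟨w₂, hw₂, rfl⟩ := h₂
    exact ⟨w₁ + w₂, by simp [Finset.sum_add_distrib, hw₁, hw₂],
      by simp [add_smul, Finset.sum_add_distrib]⟩
  | smul t _ _ h =>
    obtain ⟨w, hw, rfl⟩ := h
    exact ⟨t • w, by simp [← Finset.mul_sum, hw], by simp [Finset.smul_sum, smul_smul]⟩

noncomputable def barycenter (U : Finset E) : E := (U.card : ℝ)⁻¹ • ∑ y ∈ U, y

lemma barycenter_mem_convexHull {U : Finset E} (hU : U.Nonempty) :
    barycenter U ∈ convexHull ℝ (U : Set E) := by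
  have hN : (U.card : ℝ) ≠ 0 := by exact_mod_cast hU.card_pos.ne'
  refine Finset.mem_convexHull'.mpr ⟨fun _ => (U.card : ℝ)⁻¹, fun _ _ => by positivity, ?_, ?_⟩
  · rw [Finset.sum_const, nsmul_eq_mul, mul_inv_cancel₀ hN]
  · rw [barycenter, Finset.smul_sum]

lemma exists_smul_barycenter_add_mem {U : Finset E} (hU : U.Nonempty) {ι : Type*} [Fintype ι]
    (h : ι → E) (hh : ∀ i, h i ∈ vectorSpan ℝ (U : Set E)) :
    ∃ ρ : ℝ, 0 < ρ ∧ ∀ r : ℝ, ρ ≤ r → ∀ θ : ι → ℝ, (∀ i, |θ i| ≤ 1) →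
      r • barycenter U + ∑ i, θ i • h i ∈ r • convexHull ℝ (U : Set E) := by
  choose ω hω₀ hω using fun i => exists_weights_of_mem_vectorSpan (hh i)
  have hN : (0 : ℝ) < U.card := by exact_mod_cast hU.card_pos
  set R := ∑ i, ∑ y ∈ U, |ω i y|
  refine ⟨U.card * (R + 1), by positivity, fun r hr θ hθ => ?_⟩
  have hR : R ≤ r / U.card := by
    rw [le_div_iff₀ hN]
    nlinarith
  have hr : 0 < r := lt_of_lt_of_le (by positivity) hr
  rw [mem_smul_convexHull_iff hr]
  refine ⟨fun y => r / U.card + ∑ i, θ i * ω i y, fun y hy => ?_, ?_, ?_⟩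
  · have hbound : |∑ i, θ i * ω i y| ≤ R := calc
      |∑ i, θ i * ω i y| ≤ ∑ i, |ω i y| := by
        refine (Finset.abs_sum_le_sum_abs _ _).trans (Finset.sum_le_sum fun i _ => ?_)
        rw [abs_mul]
        exact mul_le_of_le_one_left (abs_nonneg _) (hθ i)
      _ ≤ R := Finset.sum_le_sum fun i _ =>
        Finset.single_le_sum (f := fun y => |ω i y|) (fun _ _ => abs_nonneg _) hy
    linarith [neg_abs_le (∑ i, θ i * ω i y)]
  · simp only [Finset.sum_add_distrib, Finset.sum_const, nsmul_eq_mul, Finset.sum_comm (s := U),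
      ← Finset.mul_sum, hω₀, mul_zero, add_zero]
    field_simp
  · have hmove : ∑ y ∈ U, (∑ i, θ i * ω i y) • y = ∑ i, θ i • h i := by
      simp only [Finset.sum_smul, mul_smul]
      rw [Finset.sum_comm]
      simp only [← Finset.smul_sum, hω]
    rw [← hmove, barycenter, smul_smul, ← div_eq_mul_inv, Finset.smul_sum, ← Finset.sum_add_distrib]
    simp only [add_smul]

lemma exists_pos_le_sub_of_lt {α : Type*} (U : Finset α) (f : α → ℝ) (m : ℝ) :
    ∃ κ > 0, ∀ y ∈ U, m < f y → κ ≤ f y - m := by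
  classical
  by_cases hS : (U.filter fun y => m < f y).Nonempty
  · obtain ⟨y₀, hy₀, hmin⟩ := (U.filter fun y => m < f y).exists_min_image f hS
    refine ⟨f y₀ - m, sub_pos.mpr (Finset.mem_filter.mp hy₀).2, fun y hy hmy => ?_⟩
    linarith [hmin y (Finset.mem_filter.mpr ⟨hy, hmy⟩)]
  · exact ⟨1, one_pos, fun y hy hmy => (hS ⟨y, Finset.mem_filter.mpr ⟨hy, hmy⟩⟩).elim⟩

/-- The vertices off the face where `f` is minimal lie at least some `κ > 0` above it, so they
carry total weight at most `W / κ`; hence for large `r` some minimal vertex has weight `≥ δ`. -/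
lemma eventually_sub_smul_mem_smul_convexHull {U : Finset E} (f : E →ₗ[ℝ] ℝ) {s : E} (hs : s ∈ U)
    (hmin : ∀ y ∈ U, f s ≤ f y) {δ : ℝ} (hδ : 0 ≤ δ) (W : ℝ) :
    ∀ᶠ r in atTop, ∀ x ∈ (r + δ) • convexHull ℝ (U : Set E), f x ≤ (r + δ) * f s + W →
      ∃ q ∈ U, f q = f s ∧ x - δ • q ∈ r • convexHull ℝ (U : Set E) := by
  classical
  obtain ⟨κ, hκ, hgap⟩ := exists_pos_le_sub_of_lt U f (f s)
  filter_upwards [eventually_gt_atTop 0, eventually_ge_atTop (U.card * δ + W / κ)]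
    with r hr₀ hr x hx hfx
  obtain ⟨a, ha₀, ha₁, rfl⟩ := (mem_smul_convexHull_iff (by positivity)).mp hx
  set S := U.filter fun y => f y = f s
  have hexcess : ∑ y ∈ U, a y * (f y - f s) ≤ W := by
    simp only [mul_sub, Finset.sum_sub_distrib, ← Finset.sum_mul, ha₁]
    simpa [map_sum, map_smul] using sub_le_iff_le_add'.mpr hfx
  have hoff : κ * ∑ y ∈ U.filter (fun y => ¬ f y = f s), a y ≤ W := by
    rw [Finset.mul_sum]
    refine le_trans ?_ hexcess
    refine (Finset.sum_le_sum fun y hy => ?_).trans (Finset.sum_le_sum_of_subset_of_nonneg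
      (Finset.filter_subset _ U) fun y hy _ => mul_nonneg (ha₀ y hy) (sub_nonneg.mpr (hmin y hy)))
    obtain ⟨hyU, hne⟩ := Finset.mem_filter.mp hy
    rw [mul_comm]
    exact mul_le_mul_of_nonneg_left (hgap y hyU (lt_of_le_of_ne (hmin y hyU) (Ne.symm hne)))
      (ha₀ y hyU)
  have hon : ∑ _y ∈ S, δ ≤ ∑ y ∈ S, a y := by
    have hsplit := Finset.sum_filter_add_sum_filter_not U (fun y => f y = f s) a
    have hcard : (S.card : ℝ) ≤ U.card := by exact_mod_cast Finset.card_filter_le U _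
    have hWκ : ∑ y ∈ U.filter (fun y => ¬ f y = f s), a y ≤ W / κ := by
      rw [le_div_iff₀ hκ]; linarith
    rw [Finset.sum_const, nsmul_eq_mul]
    nlinarith
  obtain ⟨q, hqS, hq⟩ :=
    Finset.exists_le_of_sum_le (s := S) ⟨s, Finset.mem_filter.mpr ⟨hs, rfl⟩⟩ hon
  obtain ⟨hqU, hfq⟩ := Finset.mem_filter.mp hqS
  refine ⟨q, hqU, hfq, (mem_smul_convexHull_iff hr₀).mpr
    ⟨fun y => a y - if y = q then δ else 0, fun y hy => ?_, ?_, ?_⟩⟩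
  · dsimp only
    split_ifs with h
    · exact sub_nonneg.mpr (h ▸ hq)
    · simpa using ha₀ y hy
  · simp [Finset.sum_sub_distrib, ha₁, hqU]
  · simp [sub_smul, Finset.sum_sub_distrib, ite_smul, hqU]

lemma apply_lt_apply_barycenter (f : E →ₗ[ℝ] ℝ) {U : Finset E} {s t : E} (ht : t ∈ U)
    (hmin : ∀ y ∈ U, f s ≤ f y) (hlt : f s < f t) : f s < f (barycenter U) := by
  have hN : (0 : ℝ) < U.card := by exact_mod_cast Finset.card_pos.mpr ⟨t, ht⟩
  have hsum : ∑ _y ∈ U, f s < ∑ y ∈ U, f y := Finset.sum_lt_sum hmin ⟨t, ht, hlt⟩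
  rw [Finset.sum_const, nsmul_eq_mul] at hsum
  rw [barycenter, map_smul, map_sum, smul_eq_mul, lt_inv_mul_iff₀ hN]
  exact hsum

end ConvexGeometry

lemma mem_span_range_smul_sub_smul {K M ι : Type*} [Field K] [AddCommGroup M] [Module K M]
    (f : M →ₗ[K] K) (h : ι → M) {a : K} (ha : a ≠ 0) (w : M) {v : M}
    (hv : v ∈ Submodule.span K (Set.range h)) (hfv : f v = 0) :
    v ∈ Submodule.span K (Set.range fun i => a • h i - f (h i) • w) := by
  set φ : M →ₗ[K] M := a • LinearMap.id - f.smulRight w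
  have hφv : φ v = a • v := by simp [φ, hfv]
  have hmem : φ v ∈ Submodule.span K (Set.range fun i => a • h i - f (h i) • w) := by
    have hrange : (Set.range fun i => a • h i - f (h i) • w) = φ '' Set.range h := by
      rw [← Set.range_comp]
      simp [φ, Function.comp_def]
    rw [hrange, ← Submodule.map_span]
    exact Submodule.mem_map_of_mem hv
  rw [hφv] at hmem
  simpa [ha] using Submodule.smul_mem _ a⁻¹ hmem

section Lattice

variable {d : ℕ}

def intVec : (Fin d → ℤ) →+ (Fin d → ℝ) := (Int.castAddHom ℝ).compLeft (Fin d)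

@[simp] lemma intVec_apply (x : Fin d → ℤ) (i : Fin d) : intVec x i = x i := rfl

lemma intVec_zsmul (k : ℤ) (x : Fin d → ℤ) : intVec (k • x) = (k : ℝ) • intVec x := by
  rw [map_zsmul, Int.cast_smul_eq_zsmul]

noncomputable def linDot (c : Fin d → ℤ) : (Fin d → ℝ) →ₗ[ℝ] ℝ := dotProductBilin ℝ ℝ (intVec c)

lemma linDot_intVec (c x : Fin d → ℤ) : linDot c (intVec x) = ((c ⬝ᵥ x : ℤ) : ℝ) := by
  simp [linDot, dotProduct]

lemma mem_AR {c : Fin d → ℤ} {K : Set (Fin d → ℝ)} {j : ℤ} :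
    j ∈ AR c K ↔ ∃ x, intVec x ∈ K ∧ c ⬝ᵥ x = j := by
  simp only [AR, intPts, Set.mem_ofPred_eq, eq_comm (a := j)]
  rfl

lemma mem_AR_neg {c : Fin d → ℤ} {K : Set (Fin d → ℝ)} {j : ℤ} :
    j ∈ AR (-c) K ↔ -j ∈ AR c K := by
  simp only [mem_AR, neg_dotProduct, neg_eq_iff_eq_neg]

lemma dvd_sub_of_mem_AR {c : Fin d → ℤ} {K : Set (Fin d → ℝ)} {lam : ℤ}
    (hdvd : ∀ w, intVec w ∈ vectorSpan ℝ K → lam ∣ c ⬝ᵥ w) (r : ℝ) {j₁ j₂ : ℤ}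
    (h₁ : j₁ ∈ AR c (r • K)) (h₂ : j₂ ∈ AR c (r • K)) : lam ∣ j₁ - j₂ := by
  obtain ⟨x, hx, rfl⟩ := mem_AR.mp h₁
  obtain ⟨y, hy, rfl⟩ := mem_AR.mp h₂
  rw [← dotProduct_sub]
  refine hdvd _ (vectorSpan_smul_le r K ?_)
  rw [map_sub]
  exact vsub_mem_vectorSpan ℝ hx hy

lemma exists_add_sum_zsmul_mem {ι : Type*} [Fintype ι] (g : ι → Fin d → ℤ)
    {K : Set (Fin d → ℝ)} {z : Fin d → ℝ} {y : Fin d → ℤ}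
    (hzy : z - intVec y ∈ Submodule.span ℝ (Set.range fun i => intVec (g i)))
    (hK : ∀ θ : ι → ℝ, (∀ i, |θ i| ≤ 1) → z + ∑ i, θ i • intVec (g i) ∈ K) :
    ∃ a : ι → ℤ, intVec (y + ∑ i, a i • g i) ∈ K := by
  obtain ⟨α, hα⟩ := (Submodule.mem_span_range_iff_exists_fun ℝ).mp hzy
  refine ⟨fun i => ⌊α i⌋, ?_⟩
  have hround : intVec (y + ∑ i, ⌊α i⌋ • g i) = z + ∑ i, (-Int.fract (α i)) • intVec (g i) := by
    simp only [map_add, map_sum, intVec_zsmul, neg_smul, Finset.sum_neg_distrib]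
    rw [← sub_eq_add_neg, eq_sub_iff_add_eq, add_assoc, ← Finset.sum_add_distrib]
    simp only [← add_smul, Int.floor_add_fract, hα]
    abel
  rw [hround]
  refine hK _ fun i => ?_
  rw [abs_neg, abs_of_nonneg (Int.fract_nonneg _)]
  exact (Int.fract_lt_one _).le

lemma dotProduct_mem_AR_of_sub_mem_span {ι : Type*} [Fintype ι] {c : Fin d → ℤ}
    (g : ι → Fin d → ℤ) (hg : ∀ i, c ⬝ᵥ g i = 0) {K : Set (Fin d → ℝ)} {z : Fin d → ℝ}
    {y : Fin d → ℤ} (hzy : z - intVec y ∈ Submodule.span ℝ (Set.range fun i => intVec (g i)))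
    (hK : ∀ θ : ι → ℝ, (∀ i, |θ i| ≤ 1) → z + ∑ i, θ i • intVec (g i) ∈ K) :
    c ⬝ᵥ y ∈ AR c K := by
  obtain ⟨a, ha⟩ := exists_add_sum_zsmul_mem g hzy hK
  refine mem_AR.mpr ⟨_, ha, ?_⟩
  simp only [dotProduct_add, dotProduct_sum, dotProduct_smul, hg, smul_zero, Finset.sum_const_zero,
    add_zero]

end Lattice

section LatticePolytope

variable {d : ℕ}

def latticePolytope (T : Finset (Fin d → ℤ)) : Set (Fin d → ℝ) :=
  convexHull ℝ ((T.image intVec : Finset (Fin d → ℝ)) : Set (Fin d → ℝ))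

variable {T : Finset (Fin d → ℤ)} {c : Fin d → ℤ}

lemma intVec_mem_latticePolytope {t : Fin d → ℤ} (ht : t ∈ T) : intVec t ∈ latticePolytope T :=
  subset_convexHull ℝ _ (by simpa using ⟨t, ht, rfl⟩)

lemma vectorSpan_latticePolytope {t₀ : Fin d → ℤ} (ht₀ : t₀ ∈ T) :
    vectorSpan ℝ (latticePolytope T) =
      Submodule.span ℝ (Set.range fun t : T => intVec ((t : Fin d → ℤ) - t₀)) := by
  rw [latticePolytope, vectorSpan_convexHull,
    vectorSpan_eq_span_vsub_set_right ℝ (p := intVec t₀) (by simpa using ⟨t₀, ht₀, rfl⟩)]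
  congr 1
  ext v
  simp [map_sub]

lemma add_dotProduct_mem_AR {r : ℝ} (hr : 0 ≤ r) {t : Fin d → ℤ} (ht : t ∈ T) {j : ℤ}
    (hj : j ∈ AR c (r • latticePolytope T)) : j + c ⬝ᵥ t ∈ AR c ((r + 1) • latticePolytope T) := by
  obtain ⟨x, hx, rfl⟩ := mem_AR.mp hj
  refine mem_AR.mpr ⟨x + t, ?_, dotProduct_add _ _ _⟩
  rw [map_add]
  exact add_mem_smul_of_convex (convex_convexHull ℝ _) hr zero_le_one hx
    (by rw [one_smul]; exact intVec_mem_latticePolytope ht)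

lemma mul_le_of_mem_AR {t₀ : Fin d → ℤ} (hmin : ∀ t ∈ T, c ⬝ᵥ t₀ ≤ c ⬝ᵥ t) {r : ℝ} (hr : 0 ≤ r)
    {j : ℤ} (hj : j ∈ AR c (r • latticePolytope T)) : r * (c ⬝ᵥ t₀ : ℤ) ≤ j := by
  obtain ⟨x, hx, rfl⟩ := mem_AR.mp hj
  rw [← linDot_intVec, ← linDot_intVec]
  refine le_apply_of_mem_smul_convexHull (linDot c) ?_ hr hx
  simp only [Finset.coe_image, Set.forall_mem_image, linDot_intVec, Int.cast_le]
  exact hmin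

lemma bddBelow_AR (hT : T.Nonempty) {r : ℝ} (hr : 0 ≤ r) :
    BddBelow (AR c (r • latticePolytope T)) := by
  obtain ⟨t₀, -, hmin⟩ := T.exists_min_image (c ⬝ᵥ ·) hT
  exact ⟨⌈r * (c ⬝ᵥ t₀ : ℤ)⌉, fun j hj => Int.ceil_le.mpr (mul_le_of_mem_AR hmin hr hj)⟩

lemma bddAbove_AR (hT : T.Nonempty) {r : ℝ} (hr : 0 ≤ r) :
    BddAbove (AR c (r • latticePolytope T)) := by
  obtain ⟨m, hm⟩ := bddBelow_AR (c := -c) hT hr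
  exact ⟨-m, fun j hj => le_neg.mpr (hm (mem_AR_neg.mpr (by simpa using hj)))⟩

lemma eventually_sub_mem_AR {t₀ : Fin d → ℤ} (ht₀ : t₀ ∈ T) (hmin : ∀ t ∈ T, c ⬝ᵥ t₀ ≤ c ⬝ᵥ t)
    (W : ℝ) : ∀ᶠ r in atTop, ∀ j ∈ AR c ((r + 1) • latticePolytope T),
      j ≤ (r + 1) * (c ⬝ᵥ t₀ : ℤ) + W → j - c ⬝ᵥ t₀ ∈ AR c (r • latticePolytope T) := by
  have hmin' : ∀ y ∈ T.image intVec, linDot c (intVec t₀) ≤ linDot c y := by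
    simpa [linDot_intVec] using hmin
  filter_upwards [eventually_sub_smul_mem_smul_convexHull (linDot c)
    (Finset.mem_image_of_mem _ ht₀) hmin' zero_le_one W] with r hr j hj hjW
  obtain ⟨x, hx, rfl⟩ := mem_AR.mp hj
  obtain ⟨q, hq, hfq, hxq⟩ := hr _ hx (by rwa [linDot_intVec, linDot_intVec])
  obtain ⟨t, -, rfl⟩ := Finset.mem_image.mp hq
  rw [linDot_intVec, linDot_intVec, Int.cast_inj] at hfq
  refine mem_AR.mpr ⟨x - t, by rw [map_sub, ← one_smul ℝ (intVec t)]; exact hxq, ?_⟩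
  rw [dotProduct_sub, hfq]

lemma eventually_sub_mem_AR_of_le {t₁ : Fin d → ℤ} (ht₁ : t₁ ∈ T)
    (hmax : ∀ t ∈ T, c ⬝ᵥ t ≤ c ⬝ᵥ t₁) (W : ℝ) :
    ∀ᶠ r in atTop, ∀ j ∈ AR c ((r + 1) • latticePolytope T),
      (r + 1) * (c ⬝ᵥ t₁ : ℤ) - W ≤ j → j - c ⬝ᵥ t₁ ∈ AR c (r • latticePolytope T) := by
  filter_upwards [eventually_sub_mem_AR (c := -c) ht₁ (by simpa using hmax) W] with r hr j hj hjW
  have h := hr (-j) (mem_AR_neg.mpr (by rwa [neg_neg]))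
    (by push_cast [neg_dotProduct]; linarith)
  rw [neg_dotProduct] at h
  rwa [← neg_neg (j - _), ← mem_AR_neg, neg_sub']

lemma eventually_exists_intVec_mem (hT : T.Nonempty) :
    ∀ᶠ r : ℝ in atTop, ∀ z : Fin d → ℤ, intVec z ∈ affineSpan ℝ (r • latticePolytope T) →
      ∃ x : Fin d → ℤ, intVec x ∈ r • latticePolytope T := by
  obtain ⟨t₀, ht₀⟩ := id hT
  have hV := vectorSpan_latticePolytope ht₀
  have hgen : ∀ t : T, intVec ((t : Fin d → ℤ) - t₀) ∈ vectorSpan ℝ (latticePolytope T) :=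
    fun t => hV ▸ Submodule.subset_span ⟨t, rfl⟩
  obtain ⟨ρ, -, hρ⟩ := exists_smul_barycenter_add_mem (hT.image intVec)
    (fun t : T => intVec ((t : Fin d → ℤ) - t₀))
    fun t => by rw [← vectorSpan_convexHull]; exact hgen t
  filter_upwards [eventually_ge_atTop ρ] with r hr z hz
  have hb : r • barycenter (T.image intVec) ∈ r • latticePolytope T :=
    Set.smul_mem_smul_set (barycenter_mem_convexHull (hT.image intVec))
  have hdir : r • barycenter (T.image intVec) - intVec z ∈ vectorSpan ℝ (latticePolytope T) := by
    refine vectorSpan_smul_le r _ ?_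
    rw [← direction_affineSpan]
    exact AffineSubspace.vsub_mem_direction (subset_affineSpan ℝ _ hb) hz
  rw [hV] at hdir
  obtain ⟨a, ha⟩ := exists_add_sum_zsmul_mem _ hdir (hρ r hr)
  exact ⟨_, ha⟩

lemma dotProduct_eq_zero_of_forall_eq {t₀ : Fin d → ℤ} (ht₀ : t₀ ∈ T)
    (hconst : ∀ t ∈ T, c ⬝ᵥ t = c ⬝ᵥ t₀) {w : Fin d → ℤ}
    (hw : intVec w ∈ vectorSpan ℝ (latticePolytope T)) : c ⬝ᵥ w = 0 := by
  rw [vectorSpan_latticePolytope ht₀] at hw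
  have hker : Submodule.span ℝ (Set.range fun t : T => intVec ((t : Fin d → ℤ) - t₀)) ≤
      LinearMap.ker (linDot c) := by
    rw [Submodule.span_le]
    rintro _ ⟨t, rfl⟩
    simp [linDot_intVec, hconst t t.2]
  have := hker hw
  rwa [LinearMap.mem_ker, linDot_intVec, Int.cast_eq_zero] at this

/-- Rounding inside a box spanned by integer vectors of `vectorSpan ∩ ker c`, centred at the deep
point `τ • barycenter`, keeps the value of `c`. -/
lemma exists_dotProduct_mem_AR_of_sub_mem {lam : ℕ} (hlam : 0 < lam) {w : Fin d → ℤ}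
    (hw : intVec w ∈ vectorSpan ℝ (latticePolytope T)) (hcw : c ⬝ᵥ w = lam) (hT : T.Nonempty) :
    ∃ ρ : ℝ, 0 < ρ ∧ ∀ τ σ : ℝ, ρ ≤ τ → 0 ≤ σ → ∀ u ∈ σ • latticePolytope T, ∀ y : Fin d → ℤ,
      u + τ • barycenter (T.image intVec) - intVec y ∈ vectorSpan ℝ (latticePolytope T) →
      linDot c (u + τ • barycenter (T.image intVec) - intVec y) = 0 →
      c ⬝ᵥ y ∈ AR c ((σ + τ) • latticePolytope T) := by
  obtain ⟨t₀, ht₀⟩ := id hT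
  set ℓ := linDot c
  set g : T → Fin d → ℤ := fun t =>
    (lam : ℤ) • ((t : Fin d → ℤ) - t₀) - (c ⬝ᵥ ((t : Fin d → ℤ) - t₀)) • w
  have hgc : ∀ t, c ⬝ᵥ g t = 0 := fun t => by
    simp only [g, dotProduct_sub, dotProduct_smul, hcw, smul_eq_mul]
    ring
  have hgen : ∀ t : T, intVec ((t : Fin d → ℤ) - t₀) ∈ vectorSpan ℝ (latticePolytope T) :=
    fun t => vectorSpan_latticePolytope ht₀ ▸ Submodule.subset_span ⟨t, rfl⟩
  have hg : ∀ t, intVec (g t) = (lam : ℝ) • intVec ((t : Fin d → ℤ) - t₀) -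
      ℓ (intVec ((t : Fin d → ℤ) - t₀)) • intVec w := fun t => by
    simp only [g, ℓ, map_sub, intVec_zsmul, linDot_intVec, dotProduct_sub, Int.cast_sub,
      Int.cast_natCast]
  have hgV : ∀ t, intVec (g t) ∈ vectorSpan ℝ (latticePolytope T) := fun t => by
    rw [hg]
    exact Submodule.sub_mem _ (Submodule.smul_mem _ _ (hgen t)) (Submodule.smul_mem _ _ hw)
  have hker : ∀ v ∈ vectorSpan ℝ (latticePolytope T), ℓ v = 0 →
      v ∈ Submodule.span ℝ (Set.range fun t => intVec (g t)) := fun v hv hv₀ => by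
    rw [vectorSpan_latticePolytope ht₀] at hv
    simpa only [hg] using
      mem_span_range_smul_sub_smul ℓ _ (Nat.cast_ne_zero.mpr hlam.ne') (intVec w) hv hv₀
  obtain ⟨ρ, hρ₀, hρ⟩ := exists_smul_barycenter_add_mem (hT.image intVec)
    (fun t => intVec (g t)) fun t => by rw [← vectorSpan_convexHull]; exact hgV t
  refine ⟨ρ, hρ₀, fun τ σ hτ hσ u hu y hzy hzy₀ => ?_⟩
  refine dotProduct_mem_AR_of_sub_mem_span g hgc (hker _ hzy hzy₀) fun θ hθ => ?_
  rw [add_assoc]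
  exact add_mem_smul_of_convex (convex_convexHull ℝ _) hσ (hρ₀.le.trans hτ) hu (hρ τ hτ θ hθ)

lemma linDot_barycenter_mem_Ioo {t₀ t₁ : Fin d → ℤ} (ht₀ : t₀ ∈ T) (ht₁ : t₁ ∈ T)
    (hmin : ∀ t ∈ T, c ⬝ᵥ t₀ ≤ c ⬝ᵥ t) (hmax : ∀ t ∈ T, c ⬝ᵥ t ≤ c ⬝ᵥ t₁)
    (hlt : c ⬝ᵥ t₀ < c ⬝ᵥ t₁) :
    linDot c (barycenter (T.image intVec)) ∈ Set.Ioo ((c ⬝ᵥ t₀ : ℤ) : ℝ) (c ⬝ᵥ t₁ : ℤ) := by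
  constructor
  · have h := apply_lt_apply_barycenter (linDot c) (Finset.mem_image_of_mem intVec ht₁)
      (s := intVec t₀) (by simpa [linDot_intVec] using hmin) (by simpa [linDot_intVec] using hlt)
    rwa [linDot_intVec] at h
  · have h := apply_lt_apply_barycenter (-linDot c) (Finset.mem_image_of_mem intVec ht₀)
      (s := intVec t₁) (by simpa [linDot_intVec] using hmax) (by simpa [linDot_intVec] using hlt)
    simpa only [LinearMap.neg_apply, linDot_intVec, neg_lt_neg_iff] using h

/-- The value `v` is taken by `c` on the segment from `r • t₀` (or `r • t₁`) to `r • barycenter`,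
at a point deep enough for the kernel box of `exists_dotProduct_mem_AR_of_sub_mem` to fit. -/
lemma exists_mem_AR_of_dvd {lam : ℕ} (hlam : 0 < lam) {w : Fin d → ℤ}
    (hw : intVec w ∈ vectorSpan ℝ (latticePolytope T)) (hcw : c ⬝ᵥ w = lam)
    {t₀ t₁ : Fin d → ℤ} (ht₀ : t₀ ∈ T) (ht₁ : t₁ ∈ T) (hmin : ∀ t ∈ T, c ⬝ᵥ t₀ ≤ c ⬝ᵥ t)
    (hmax : ∀ t ∈ T, c ⬝ᵥ t ≤ c ⬝ᵥ t₁) (hlt : c ⬝ᵥ t₀ < c ⬝ᵥ t₁) :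
    ∃ C : ℝ, ∀ r : ℝ, ∀ x₀ : Fin d → ℤ, intVec x₀ ∈ r • latticePolytope T → ∀ v : ℤ,
      r * (c ⬝ᵥ t₀ : ℤ) + C ≤ v → v ≤ r * (c ⬝ᵥ t₁ : ℤ) - C → (lam : ℤ) ∣ v - c ⬝ᵥ x₀ →
        v ∈ AR c (r • latticePolytope T) := by
  obtain ⟨ρ, hρ₀, hρ⟩ := exists_dotProduct_mem_AR_of_sub_mem hlam hw hcw ⟨t₀, ht₀⟩
  set b := barycenter (T.image intVec)
  set ℓ := linDot c
  have key : ∀ s ∈ T, ∀ τ r : ℝ, ρ ≤ τ → τ ≤ r → ∀ x₀ : Fin d → ℤ,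
      intVec x₀ ∈ r • latticePolytope T → ∀ v : ℤ, (lam : ℤ) ∣ v - c ⬝ᵥ x₀ →
        (r - τ) * (c ⬝ᵥ s : ℤ) + τ * ℓ b = v → v ∈ AR c (r • latticePolytope T) := by
    intro s hs τ r hτ hτr x₀ hx₀ v ⟨k, hk⟩ hv
    have hu : (r - τ) • intVec s ∈ (r - τ) • latticePolytope T :=
      Set.smul_mem_smul_set (intVec_mem_latticePolytope hs)
    have hz : (r - τ) • intVec s + τ • b ∈ r • latticePolytope T := by
      have h := add_mem_smul_of_convex (convex_convexHull ℝ _) (sub_nonneg.mpr hτr)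
        (hρ₀.le.trans hτ) hu (Set.smul_mem_smul_set
          (barycenter_mem_convexHull (Finset.Nonempty.image ⟨t₀, ht₀⟩ intVec)))
      rwa [sub_add_cancel] at h
    have hy : c ⬝ᵥ (x₀ + k • w) = v := by
      rw [dotProduct_add, dotProduct_smul, hcw, smul_eq_mul]
      linarith
    rw [← sub_add_cancel r τ, ← hy]
    refine hρ τ (r - τ) hτ (sub_nonneg.mpr hτr) _ hu _ ?_ ?_
    · rw [map_add, intVec_zsmul, ← sub_sub]
      exact Submodule.sub_mem _ (vectorSpan_smul_le r _ (vsub_mem_vectorSpan ℝ hz hx₀))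
        (Submodule.smul_mem _ _ hw)
    · rw [map_sub, linDot_intVec, hy, ← hv]
      simp only [ℓ, map_add, map_smul, smul_eq_mul, linDot_intVec, sub_self]
  obtain ⟨hb₀, hb₁⟩ := linDot_barycenter_mem_Ioo ht₀ ht₁ hmin hmax hlt
  refine ⟨ρ * ((c ⬝ᵥ t₁ : ℤ) - (c ⬝ᵥ t₀ : ℤ)), fun r x₀ hx₀ v hv₀ hv₁ hdvd => ?_⟩
  rcases le_total (v : ℝ) (r * ℓ b) with hvb | hvb
  · have hne : ℓ b - (c ⬝ᵥ t₀ : ℤ) ≠ 0 := (sub_pos.mpr hb₀).ne'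
    refine key t₀ ht₀ ((v - r * (c ⬝ᵥ t₀ : ℤ)) / (ℓ b - (c ⬝ᵥ t₀ : ℤ))) r ?_ ?_ x₀ hx₀ v hdvd ?_
    · rw [le_div_iff₀ (sub_pos.mpr hb₀)]
      nlinarith
    · rw [div_le_iff₀ (sub_pos.mpr hb₀)]
      linarith
    · field_simp
      ring
  · have hne : ((c ⬝ᵥ t₁ : ℤ) : ℝ) - ℓ b ≠ 0 := (sub_pos.mpr hb₁).ne'
    refine key t₁ ht₁ ((r * (c ⬝ᵥ t₁ : ℤ) - v) / ((c ⬝ᵥ t₁ : ℤ) - ℓ b)) r ?_ ?_ x₀ hx₀ v hdvd ?_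
    · rw [le_div_iff₀ (sub_pos.mpr hb₁)]
      nlinarith
    · rw [div_le_iff₀ (sub_pos.mpr hb₁)]
      linarith
    · field_simp
      ring

lemma exists_endShift {lam : ℕ} (hlam : 0 < lam) (hT : T.Nonempty)
    (hdvd : ∀ w, intVec w ∈ vectorSpan ℝ (latticePolytope T) → (lam : ℤ) ∣ c ⬝ᵥ w)
    {t₀ t₁ : Fin d → ℤ} (ht₀ : t₀ ∈ T) (ht₁ : t₁ ∈ T) (hle : c ⬝ᵥ t₀ ≤ c ⬝ᵥ t₁) {r : ℝ}
    (hr : 0 ≤ r) {j₀ L H : ℤ} (hLH : L + lam ≤ H + 1) (hov : L + c ⬝ᵥ t₁ ≤ H + c ⬝ᵥ t₀)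
    (hmid : ∀ j, L ≤ j → j ≤ H → (lam : ℤ) ∣ j - j₀ → j ∈ AR c (r • latticePolytope T))
    (hbot : ∀ j ∈ AR c ((r + 1) • latticePolytope T), j ≤ L + c ⬝ᵥ t₀ →
      j - c ⬝ᵥ t₀ ∈ AR c (r • latticePolytope T))
    (htop : ∀ j ∈ AR c ((r + 1) • latticePolytope T), H + c ⬝ᵥ t₁ ≤ j →
      j - c ⬝ᵥ t₁ ∈ AR c (r • latticePolytope T)) :
    ∃ a₀, EndShift lam (AR c (r • latticePolytope T)) (AR c ((r + 1) • latticePolytope T))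
      a₀ L H (c ⬝ᵥ t₀) (c ⬝ᵥ t₁) := by
  obtain ⟨a₀, haL, haH, ha⟩ := exists_mem_Icc_dvd_sub hlam hLH j₀
  have ha₀ := hmid a₀ haL haH ha
  have hvert : ∀ {t}, t ∈ T → intVec t ∈ latticePolytope T := intVec_mem_latticePolytope
  refine ⟨a₀,
    { bddBelow_left := bddBelow_AR hT hr
      bddAbove_left := bddAbove_AR hT hr
      bddBelow_right := bddBelow_AR hT (by linarith)
      bddAbove_right := bddAbove_AR hT (by linarith)
      mem := ha₀
      le_mem := haL
      mem_le := haH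
      dvd_left := fun j hj => dvd_sub_of_mem_AR hdvd r hj ha₀
      dvd_right := fun j hj =>
        dvd_sub_of_mem_AR hdvd (r + 1) hj (add_dotProduct_mem_AR hr ht₀ ha₀)
      mem_of_dvd := fun j hLj hjH hj => hmid j hLj hjH (sub_add_sub_cancel j a₀ j₀ ▸ dvd_add hj ha)
      shift_le := hle
      overlap := hov
      dvd_shift := by
        rw [← dotProduct_sub]
        exact hdvd _ (by rw [map_sub]; exact vsub_mem_vectorSpan ℝ (hvert ht₁) (hvert ht₀))
      add_mem₀ := fun j hj => add_dotProduct_mem_AR hr ht₀ hj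
      add_mem₁ := fun j hj => add_dotProduct_mem_AR hr ht₁ hj
      sub_mem₀ := hbot
      sub_mem₁ := htop }⟩

lemma eventually_ncard_gapsOf_eq_of_pos (hT : T.Nonempty) {lam : ℕ} (hlam : 0 < lam)
    (hdvd : ∀ w, intVec w ∈ vectorSpan ℝ (latticePolytope T) → (lam : ℤ) ∣ c ⬝ᵥ w)
    {w : Fin d → ℤ} (hw : intVec w ∈ vectorSpan ℝ (latticePolytope T)) (hcw : c ⬝ᵥ w = lam) :
    ∀ᶠ r : ℝ in atTop, ∀ x₀ : Fin d → ℤ, intVec x₀ ∈ r • latticePolytope T →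
      (gapsOf lam (AR c (r • latticePolytope T))).ncard =
        (gapsOf lam (AR c ((r + 1) • latticePolytope T))).ncard := by
  obtain ⟨t₀, ht₀, hmin⟩ := T.exists_min_image (c ⬝ᵥ ·) hT
  obtain ⟨t₁, ht₁, hmax⟩ := T.exists_max_image (c ⬝ᵥ ·) hT
  have hlt : c ⬝ᵥ t₀ < c ⬝ᵥ t₁ := by
    by_contra! hle
    have := dotProduct_eq_zero_of_forall_eq ht₀
      (fun t ht => le_antisymm ((hmax t ht).trans hle) (hmin t ht)) hw
    omega
  obtain ⟨C, hC⟩ := exists_mem_AR_of_dvd hlam hw hcw ht₀ ht₁ hmin hmax hlt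
  set μ := c ⬝ᵥ t₀
  set ν := c ⬝ᵥ t₁
  have hgap : (0 : ℝ) < ν - μ := by exact_mod_cast sub_pos.mpr hlt
  -- The last threshold makes the window `[⌈r μ + C⌉, ⌊r ν - C⌋]` hold a full period modulo `λ`
  -- and makes its translates by `μ` and by `ν` overlap.
  filter_upwards [eventually_sub_mem_AR ht₀ hmin (C + 1),
    eventually_sub_mem_AR_of_le ht₁ hmax (C + 1), eventually_ge_atTop 0,
    eventually_ge_atTop ((2 * C + 2 + lam) / (ν - μ) + 1)]
    with r hbot htop hr₀ hr x₀ hx₀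
  rw [← le_sub_iff_add_le, div_le_iff₀ hgap] at hr
  have hL := Int.ceil_lt_add_one (r * μ + C)
  have hH := Int.sub_one_lt_floor (r * ν - C)
  have hLH : ((⌈r * μ + C⌉ + lam : ℤ) : ℝ) < ⌊r * ν - C⌋ := by
    push_cast
    nlinarith
  have hov : ((⌈r * μ + C⌉ + ν : ℤ) : ℝ) < ((⌊r * ν - C⌋ + μ : ℤ) : ℝ) := by
    push_cast
    nlinarith
  obtain ⟨a₀, h⟩ := exists_endShift hlam hT hdvd ht₀ ht₁ hlt.le hr₀ (j₀ := c ⬝ᵥ x₀)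
    (by have := Int.cast_lt.mp hLH; omega) (Int.cast_lt.mp hov).le
    (fun j hLj hjH => hC r x₀ hx₀ j (Int.ceil_le.mp hLj) (Int.le_floor.mp hjH))
    (fun j hj hjL => hbot j hj (by
      have : (j : ℝ) ≤ ((⌈r * μ + C⌉ + μ : ℤ) : ℝ) := by exact_mod_cast hjL
      push_cast at this
      linarith))
    (fun j hj hjH => htop j hj (by
      have : ((⌊r * ν - C⌋ + ν : ℤ) : ℝ) ≤ (j : ℝ) := by exact_mod_cast hjH
      push_cast at this
      linarith))
  exact h.ncard_gapsOf_eq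

lemma eventually_ncard_gapsOf_eq (hT : T.Nonempty) {lam : ℕ}
    (hdvd : ∀ w, intVec w ∈ vectorSpan ℝ (latticePolytope T) → (lam : ℤ) ∣ c ⬝ᵥ w)
    {w : Fin d → ℤ} (hw : intVec w ∈ vectorSpan ℝ (latticePolytope T)) (hcw : c ⬝ᵥ w = lam) :
    ∀ᶠ r : ℝ in atTop, ∀ x₀ : Fin d → ℤ, intVec x₀ ∈ r • latticePolytope T →
      (gapsOf lam (AR c (r • latticePolytope T))).ncard =
        (gapsOf lam (AR c ((r + 1) • latticePolytope T))).ncard := by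
  rcases lam.eq_zero_or_pos with rfl | hlam
  · obtain ⟨t, ht⟩ := hT
    filter_upwards [eventually_ge_atTop 0] with r hr x₀ hx₀
    have hA : c ⬝ᵥ x₀ ∈ AR c (r • latticePolytope T) := mem_AR.mpr ⟨x₀, hx₀, rfl⟩
    rw [gapsOf_zero_eq_empty ⟨_, hA⟩ (bddBelow_AR ⟨t, ht⟩ hr), gapsOf_zero_eq_empty
      ⟨_, add_dotProduct_mem_AR hr ht hA⟩ (bddBelow_AR ⟨t, ht⟩ (by linarith))]
  · exact eventually_ncard_gapsOf_eq_of_pos hT hlam hdvd hw hcw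

theorem eventually_AR_smul_latticePolytope (hT : T.Nonempty) {lam : ℕ}
    (hlam : ∀ j : ℤ, (∃ w, intVec w ∈ vectorSpan ℝ (latticePolytope T) ∧ j = c ⬝ᵥ w) ↔
      (lam : ℤ) ∣ j) :
    ∀ᶠ r : ℝ in atTop, (∃ z, intVec z ∈ affineSpan ℝ (r • latticePolytope T)) →
      (AR c (r • latticePolytope T)).Nonempty ∧
      (AR c ((r + 1) • latticePolytope T)).Nonempty ∧
      (∀ j₁ ∈ AR c (r • latticePolytope T), ∀ j₂ ∈ AR c (r • latticePolytope T),
        (lam : ℤ) ∣ j₁ - j₂) ∧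
      (∀ j₁ ∈ AR c ((r + 1) • latticePolytope T), ∀ j₂ ∈ AR c ((r + 1) • latticePolytope T),
        (lam : ℤ) ∣ j₁ - j₂) ∧
      (gapsOf lam (AR c (r • latticePolytope T))).ncard =
        (gapsOf lam (AR c ((r + 1) • latticePolytope T))).ncard := by
  have hdvd : ∀ w, intVec w ∈ vectorSpan ℝ (latticePolytope T) → (lam : ℤ) ∣ c ⬝ᵥ w :=
    fun w hw => (hlam _).mp ⟨w, hw, rfl⟩
  obtain ⟨w, hw, hcw⟩ := (hlam lam).mpr dvd_rfl
  obtain ⟨t, ht⟩ := id hT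
  filter_upwards [eventually_exists_intVec_mem hT, eventually_ncard_gapsOf_eq hT hdvd hw hcw.symm,
    eventually_ge_atTop 0] with r hne hgap hr ⟨z, hz⟩
  obtain ⟨x₀, hx₀⟩ := hne z hz
  have hA : c ⬝ᵥ x₀ ∈ AR c (r • latticePolytope T) := mem_AR.mpr ⟨x₀, hx₀, rfl⟩
  exact ⟨⟨_, hA⟩, ⟨_, add_dotProduct_mem_AR hr ht hA⟩,
    fun _ h₁ _ h₂ => dvd_sub_of_mem_AR hdvd _ h₁ h₂,
    fun _ h₁ _ h₂ => dvd_sub_of_mem_AR hdvd _ h₁ h₂, hgap x₀ hx₀⟩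

end LatticePolytope

end ArithRange

open ArithRange Filter

theorem gaps_cardinality_stabilizes_general {d : ℕ} (P : Set (Fin d → ℝ))
    (D : ℕ) (hD : IsDenom P D) (c : Fin d → ℤ)
    (lam : ℕ)
    (hlam : {j : ℤ | ∃ w : Fin d → ℤ,
        ((fun i => (w i : ℝ)) ∈ Submodule.span ℝ (P - P)) ∧ j = ∑ i, c i * w i}
      = {j : ℤ | (lam : ℤ) ∣ j}) :
    ∃ N : ℕ, ∀ n : ℕ, N ≤ n →
      (∃ z : Fin d → ℤ, (fun i => (z i : ℝ)) ∈ affineSpan ℝ ((n : ℝ) • P)) →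
      (AR c ((n : ℝ) • P)).Nonempty ∧
      (AR c (((n + D : ℕ) : ℝ) • P)).Nonempty ∧
      (∀ j₁ ∈ AR c ((n : ℝ) • P), ∀ j₂ ∈ AR c ((n : ℝ) • P), (lam : ℤ) ∣ j₁ - j₂) ∧
      (∀ j₁ ∈ AR c (((n + D : ℕ) : ℝ) • P), ∀ j₂ ∈ AR c (((n + D : ℕ) : ℝ) • P),
        (lam : ℤ) ∣ j₁ - j₂) ∧
      (gapsOf lam (AR c ((n : ℝ) • P))).ncard
        = (gapsOf lam (AR c (((n + D : ℕ) : ℝ) • P))).ncard := by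
  obtain ⟨hD₀, ⟨T, hT, hDP⟩, -⟩ := hD
  have hD₀' : (D : ℝ) ≠ 0 := by positivity
  have hQ : (D : ℝ) • P = latticePolytope T := by
    rw [hDP, latticePolytope, Finset.coe_image]
    rfl
  have hdil : ∀ s : ℝ, s • P = (s / D) • latticePolytope T := fun s => by
    rw [← hQ, smul_smul, div_mul_cancel₀ _ hD₀']
  have hlam' : ∀ j : ℤ, (∃ w, intVec w ∈ vectorSpan ℝ (latticePolytope T) ∧ j = c ⬝ᵥ w) ↔
      (lam : ℤ) ∣ j := by
    rw [← hQ, vectorSpan_smul hD₀', vectorSpan_def]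
    exact Set.ext_iff.mp hlam
  have hscale : Tendsto (fun n : ℕ => (n : ℝ) / D) atTop atTop :=
    tendsto_natCast_atTop_atTop.atTop_div_const (by positivity)
  obtain ⟨N, hN⟩ :=
    eventually_atTop.mp (hscale.eventually (eventually_AR_smul_latticePolytope hT hlam'))
  refine ⟨N, fun n hn hz => ?_⟩
  have hnD : ((n + D : ℕ) : ℝ) / D = n / D + 1 := by
    push_cast
    field_simp
  simp only [hdil, hnD] at hz ⊢
  exact hN n hn hz

/-- for a rational polytope `P` with denominator `D`, a nonzero `c ∈ ℤ^d`,
and `λ ≥ 0` the generator of `{c·w : w ∈ span(P−P) ∩ ℤ^d}`, for all large enough `n`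
such that the affine span of `nP` contains a lattice point: `AR_c(nP)` and
`AR_c((n+D)P)` are nonempty, lie in single residue classes mod `λ`, and have equally
many gaps. -/
theorem gaps_cardinality_stabilizes {d : ℕ} (P : Set (Fin d → ℝ)) (hP : IsRatPolytope P)
    (D : ℕ) (hD : IsDenom P D) (c : Fin d → ℤ) (hc : c ≠ 0)
    (lam : ℕ)
    (hlam : {j : ℤ | ∃ w : Fin d → ℤ,
        ((fun i => (w i : ℝ)) ∈ Submodule.span ℝ (P - P)) ∧ j = ∑ i, c i * w i}
      = {j : ℤ | (lam : ℤ) ∣ j}) :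
    ∃ N : ℕ, ∀ n : ℕ, N ≤ n →
      (∃ z : Fin d → ℤ, (fun i => (z i : ℝ)) ∈ affineSpan ℝ ((n : ℝ) • P)) →
      (AR c ((n : ℝ) • P)).Nonempty ∧
      (AR c (((n + D : ℕ) : ℝ) • P)).Nonempty ∧
      (∀ j₁ ∈ AR c ((n : ℝ) • P), ∀ j₂ ∈ AR c ((n : ℝ) • P), (lam : ℤ) ∣ j₁ - j₂) ∧
      (∀ j₁ ∈ AR c (((n + D : ℕ) : ℝ) • P), ∀ j₂ ∈ AR c (((n + D : ℕ) : ℝ) • P),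
        (lam : ℤ) ∣ j₁ - j₂) ∧
      (gapsOf lam (AR c ((n : ℝ) • P))).ncard
        = (gapsOf lam (AR c (((n + D : ℕ) : ℝ) • P))).ncard :=
  gaps_cardinality_stabilizes_general P D hD c lam hlam
end

section
/- Let P = conv{(0,0), (1,0), (3/5, 14/5)} ⊆ ℝ². Then aw(P) = 1 and w(P) = 1; the set of nonzero c ∈ ℤ² with aw_c(P) = 1 is exactly { (0,k) : k ∈ ℤ, k ≠ 0 }; the set of nonzero c ∈ ℤ² with w_c(P) = 1 is exactly { (1,0), (−1,0) }; and consequently no nonzero c ∈ ℤ² simultaneously attains the minimum arithmetic width and the minimum lattice width of P. -/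
open Pointwise

/-- The arithmetic width of `K`: the minimum of `aw_c(K)` over nonzero `c ∈ ℤ^d`. -/
noncomputable def awMin {d : ℕ} (K : Set (Fin d → ℝ)) : ℕ :=
  sInf {m : ℕ | ∃ c : Fin d → ℤ, c ≠ 0 ∧ m = aw c K}

/-- The lattice width of `K` in direction `c`: `max_{x,y ∈ K} c·(x−y)`. -/
noncomputable def latticeWidth {d : ℕ} (c : Fin d → ℤ) (K : Set (Fin d → ℝ)) : ℝ :=
  sSup ((fun p : (Fin d → ℝ) × (Fin d → ℝ) => ∑ i, (c i : ℝ) * (p.1 i - p.2 i)) '' (K ×ˢ K))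

/-- The lattice width of `K`: the infimum of `w_c(K)` over nonzero `c ∈ ℤ^d`. -/
noncomputable def latticeWidthMin {d : ℕ} (K : Set (Fin d → ℝ)) : ℝ :=
  sInf {r : ℝ | ∃ c : Fin d → ℤ, c ≠ 0 ∧ r = latticeWidth c K}

/-!
The triangle lies in `{0 ≤ x₂, 3x₂ ≤ 14x₁, 7x₁ + x₂ ≤ 7}`, whose only lattice points are
`(0,0)` and `(1,0)`; hence `AR_c(P) = {0, c₁}`, a single point exactly when `c₁ = 0`.
A linear functional takes its extreme values on a convex hull at the vertices, so
`5 w_c(P) = max(|5c₁|, |3c₁ + 14c₂|, |14c₂ - 2c₁|)`. This integer is at least `5` for `c ≠ 0`,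
with equality only for `c = ±(1,0)`.
-/

open Matrix

lemma awMin_eq_of_le_aw {d : ℕ} {K : Set (Fin d → ℝ)} {m : ℕ} (c : Fin d → ℤ) (hc : c ≠ 0)
    (hcm : aw c K = m) (hle : ∀ c' : Fin d → ℤ, c' ≠ 0 → m ≤ aw c' K) : awMin K = m := by
  refine IsLeast.csInf_eq ⟨⟨c, hc, hcm.symm⟩, ?_⟩
  rintro _ ⟨c', hc', rfl⟩
  exact hle c' hc'

lemma latticeWidthMin_eq_of_le_latticeWidth {d : ℕ} {K : Set (Fin d → ℝ)} {r : ℝ}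
    (c : Fin d → ℤ) (hc : c ≠ 0) (hcr : latticeWidth c K = r)
    (hle : ∀ c' : Fin d → ℤ, c' ≠ 0 → r ≤ latticeWidth c' K) : latticeWidthMin K = r := by
  refine IsLeast.csInf_eq ⟨⟨c, hc, hcr.symm⟩, ?_⟩
  rintro _ ⟨c', hc', rfl⟩
  exact hle c' hc'

lemma AR_eq_image {d : ℕ} (c : Fin d → ℤ) (K : Set (Fin d → ℝ)) :
    AR c K = (fun x => ∑ i, c i * x i) '' intPts K := by
  ext n
  simp only [AR, Set.mem_ofPred_eq, Set.mem_image, eq_comm]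

lemma apply_zero_eq_zero_iff_exists_eq_vec {α : Type*} [Zero α] {c : Fin 2 → α} (hc : c ≠ 0) :
    c 0 = 0 ↔ ∃ k, k ≠ 0 ∧ c = ![0, k] := by
  simp only [Ne, funext_iff, Fin.forall_fin_two, Pi.zero_apply, not_and_or] at hc
  simp only [funext_iff, Fin.forall_fin_two, Matrix.cons_val_zero, Matrix.cons_val_one]
  constructor
  · intro h₀
    exact ⟨c 1, hc.resolve_left (not_not.mpr h₀), h₀, rfl⟩
  · rintro ⟨k, -, h₀, -⟩
    exact h₀

section ConvexHull

variable {d : ℕ} {s : Set (Fin d → ℝ)}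

lemma exists_mem_dotProduct_sub_le (a : Fin d → ℝ) {x y : Fin d → ℝ}
    (hx : x ∈ convexHull ℝ s) (hy : y ∈ convexHull ℝ s) :
    ∃ v ∈ s, ∃ w ∈ s, a ⬝ᵥ (x - y) ≤ a ⬝ᵥ (v - w) := by
  obtain ⟨v, hv, hxv⟩ := ((dotProductBilin ℝ ℝ a).convexOn (convex_convexHull ℝ s)
    ).exists_ge_of_mem_convexHull (subset_convexHull ℝ s) hx
  obtain ⟨w, hw, hwy⟩ := ((dotProductBilin ℝ ℝ a).concaveOn (convex_convexHull ℝ s)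
    ).exists_le_of_mem_convexHull (subset_convexHull ℝ s) hy
  refine ⟨v, hv, w, hw, ?_⟩
  simp only [dotProductBilin_apply_apply] at hxv hwy
  simp only [dotProduct_sub]
  linarith

lemma latticeWidth_convexHull_le {c : Fin d → ℤ} {r : ℝ} (hs : s.Nonempty)
    (h : ∀ v ∈ s, ∀ w ∈ s, ∑ i, (c i : ℝ) * (v i - w i) ≤ r) :
    latticeWidth c (convexHull ℝ s) ≤ r := by
  have hne := hs.convexHull (𝕜 := ℝ)
  refine csSup_le ((hne.prod hne).image _) ?_
  rintro _ ⟨⟨x, y⟩, ⟨hx, hy⟩, rfl⟩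
  obtain ⟨v, hv, w, hw, hle⟩ := exists_mem_dotProduct_sub_le (fun i => (c i : ℝ)) hx hy
  exact hle.trans (h v hv w hw)

lemma le_latticeWidth_convexHull {c : Fin d → ℤ} (hs : s.Finite) {x y : Fin d → ℝ}
    (hx : x ∈ convexHull ℝ s) (hy : y ∈ convexHull ℝ s) :
    ∑ i, (c i : ℝ) * (x i - y i) ≤ latticeWidth c (convexHull ℝ s) := by
  obtain ⟨M, hM⟩ := ((hs.prod hs).image
    fun p : (Fin d → ℝ) × (Fin d → ℝ) => ∑ i, (c i : ℝ) * (p.1 i - p.2 i)).bddAbove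
  refine le_csSup ⟨M, ?_⟩ ⟨(x, y), ⟨hx, hy⟩, rfl⟩
  rintro _ ⟨⟨x', y'⟩, ⟨hx', hy'⟩, rfl⟩
  obtain ⟨v, hv, w, hw, hle⟩ := exists_mem_dotProduct_sub_le (fun i => (c i : ℝ)) hx' hy'
  exact hle.trans (hM ⟨(v, w), ⟨hv, hw⟩, rfl⟩)

end ConvexHull

def triangle : Set (Fin 2 → ℝ) := convexHull ℝ {![(0 : ℝ), 0], ![1, 0], ![3 / 5, 14 / 5]}

lemma triangle_subset :
    triangle ⊆ {x | 0 ≤ x 1 ∧ 3 * x 1 ≤ 14 * x 0 ∧ 7 * x 0 + x 1 ≤ 7} := by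
  refine convexHull_min ?_ ?_
  · rintro x (rfl | rfl | rfl) <;> norm_num
  · rintro x ⟨hx₁, hx₂, hx₃⟩ y ⟨hy₁, hy₂, hy₃⟩ a b ha hb hab
    simp only [Set.mem_ofPred_eq, Pi.add_apply, Pi.smul_apply, smul_eq_mul]
    refine ⟨?_, ?_, ?_⟩ <;> nlinarith

lemma intPts_triangle : intPts triangle = {![0, 0], ![1, 0]} := by
  ext x
  simp only [Set.mem_insert_iff, Set.mem_singleton_iff, funext_iff, Fin.forall_fin_two]
  constructor
  · intro hx
    obtain ⟨h₁, h₂, h₃⟩ : (0 : ℝ) ≤ x 1 ∧ 3 * (x 1 : ℝ) ≤ 14 * x 0 ∧ 7 * (x 0 : ℝ) + x 1 ≤ 7 :=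
      triangle_subset hx
    have h₁ : 0 ≤ x 1 := by exact_mod_cast h₁
    have h₂ : 3 * x 1 ≤ 14 * x 0 := by exact_mod_cast h₂
    have h₃ : 7 * x 0 + x 1 ≤ 7 := by exact_mod_cast h₃
    simp only [Matrix.cons_val_zero, Matrix.cons_val_one]
    omega
  · rintro (h | h) <;>
      refine subset_convexHull ℝ _ ?_ <;> simp [funext_iff, Fin.forall_fin_two, h]

lemma AR_triangle (c : Fin 2 → ℤ) : AR c triangle = {0, c 0} := by
  simp [AR_eq_image, intPts_triangle, Set.image_pair, Fin.sum_univ_two]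

lemma aw_triangle_eq_one_iff (c : Fin 2 → ℤ) : aw c triangle = 1 ↔ c 0 = 0 := by
  rw [aw, AR_triangle]
  rcases eq_or_ne (c 0) 0 with h | h
  · simp [h]
  · simp [Set.ncard_pair h.symm, h]

lemma one_le_aw_triangle (c : Fin 2 → ℤ) : 1 ≤ aw c triangle := by
  rw [aw, AR_triangle, Nat.one_le_iff_ne_zero, Ne, Set.ncard_eq_zero (Set.toFinite _)]
  exact Set.insert_nonempty _ _ |>.ne_empty

/-- `5 * w_c(triangle)`: the largest `c ⬝ᵥ (v - w)` over pairs of vertices, with the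
denominator `5` of the vertices cleared. -/
def triangleWidthNum (c : Fin 2 → ℤ) : ℤ :=
  max |5 * c 0| (max |3 * c 0 + 14 * c 1| |14 * c 1 - 2 * c 0|)

lemma latticeWidth_triangle (c : Fin 2 → ℤ) :
    latticeWidth c triangle = triangleWidthNum c / 5 := by
  set V : Set (Fin 2 → ℝ) := {![(0 : ℝ), 0], ![1, 0], ![3 / 5, 14 / 5]}
  apply le_antisymm
  · have h₀ : |5 * (c 0 : ℝ)| ≤ triangleWidthNum c := by
      exact_mod_cast le_max_left _ _
    have h₁ : |3 * (c 0 : ℝ) + 14 * c 1| ≤ triangleWidthNum c := by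
      exact_mod_cast (le_max_left _ _).trans (le_max_right _ _)
    have h₂ : |14 * (c 1 : ℝ) - 2 * c 0| ≤ triangleWidthNum c := by
      exact_mod_cast (le_max_right _ _).trans (le_max_right _ _)
    rw [abs_le] at h₀ h₁ h₂
    refine latticeWidth_convexHull_le (by simp) ?_
    rintro v (rfl | rfl | rfl) w (rfl | rfl | rfl) <;>
      simp only [Fin.sum_univ_two, Matrix.cons_val_zero, Matrix.cons_val_one] <;>
      linarith
  · have key : ∀ v ∈ V, ∀ w ∈ V, ∑ i, (c i : ℝ) * (v i - w i) ≤ latticeWidth c triangle :=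
      fun v hv w hw => le_latticeWidth_convexHull (Set.toFinite V)
        (subset_convexHull ℝ V hv) (subset_convexHull ℝ V hw)
    have k₁₀ := key ![1, 0] (by simp [V]) ![0, 0] (by simp [V])
    have k₀₁ := key ![0, 0] (by simp [V]) ![1, 0] (by simp [V])
    have k₂₀ := key ![3 / 5, 14 / 5] (by simp [V]) ![0, 0] (by simp [V])
    have k₀₂ := key ![0, 0] (by simp [V]) ![3 / 5, 14 / 5] (by simp [V])
    have k₂₁ := key ![3 / 5, 14 / 5] (by simp [V]) ![1, 0] (by simp [V])
    have k₁₂ := key ![1, 0] (by simp [V]) ![3 / 5, 14 / 5] (by simp [V])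
    simp only [Fin.sum_univ_two, Matrix.cons_val_zero, Matrix.cons_val_one]
      at k₁₀ k₀₁ k₂₀ k₀₂ k₂₁ k₁₂
    rw [div_le_iff₀ (by norm_num), triangleWidthNum]
    push_cast
    refine max_le (abs_le.mpr ⟨?_, ?_⟩)
      (max_le (abs_le.mpr ⟨?_, ?_⟩) (abs_le.mpr ⟨?_, ?_⟩)) <;> linarith

lemma one_le_latticeWidth_triangle {c : Fin 2 → ℤ} (hc : c ≠ 0) :
    1 ≤ latticeWidth c triangle := by
  rw [latticeWidth_triangle, le_div_iff₀ (by norm_num), one_mul]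
  simp only [Ne, funext_iff, Fin.forall_fin_two, Pi.zero_apply, not_and_or] at hc
  have : 5 ≤ triangleWidthNum c := by
    simp only [triangleWidthNum, abs_eq_max_neg]
    omega
  exact_mod_cast this

lemma latticeWidth_triangle_eq_one_iff (c : Fin 2 → ℤ) :
    latticeWidth c triangle = 1 ↔ c = ![1, 0] ∨ c = ![-1, 0] := by
  rw [latticeWidth_triangle, div_eq_one_iff_eq (by norm_num)]
  have : triangleWidthNum c = 5 ↔ c = ![1, 0] ∨ c = ![-1, 0] := by
    simp only [triangleWidthNum, abs_eq_max_neg, funext_iff, Fin.forall_fin_two,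
      Matrix.cons_val_zero, Matrix.cons_val_one]
    omega
  exact_mod_cast this

/-- for `P = conv{(0,0), (1,0), (3/5, 14/5)}`, one has `aw(P) = 1` and
`w(P) = 1`; the optimal directions for the arithmetic width are exactly `(0,k)`, `k ≠ 0`,
while the optimal directions for the lattice width are exactly `±(1,0)`; in particular
no nonzero integer direction attains both minima simultaneously. -/
theorem aw_and_latticeWidth_directions_differ
    (P : Set (Fin 2 → ℝ))
    (hP : P = convexHull ℝ {![(0 : ℝ), 0], ![1, 0], ![3 / 5, 14 / 5]}) :
    awMin P = 1 ∧
    latticeWidthMin P = 1 ∧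
    (∀ c : Fin 2 → ℤ, c ≠ 0 → (aw c P = 1 ↔ ∃ k : ℤ, k ≠ 0 ∧ c = ![0, k])) ∧
    (∀ c : Fin 2 → ℤ, c ≠ 0 → (latticeWidth c P = 1 ↔ c = ![1, 0] ∨ c = ![-1, 0])) ∧
    (¬ ∃ c : Fin 2 → ℤ, c ≠ 0 ∧ aw c P = awMin P ∧ latticeWidth c P = latticeWidthMin P) := by
  obtain rfl : P = triangle := hP
  have hne₀₁ : (![0, 1] : Fin 2 → ℤ) ≠ 0 := by simp [funext_iff]
  have hne₁₀ : (![1, 0] : Fin 2 → ℤ) ≠ 0 := by simp [funext_iff]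
  have hawMin : awMin triangle = 1 := awMin_eq_of_le_aw ![0, 1] hne₀₁
    ((aw_triangle_eq_one_iff _).mpr rfl) fun c _ => one_le_aw_triangle c
  have hlwMin : latticeWidthMin triangle = 1 :=
    latticeWidthMin_eq_of_le_latticeWidth ![1, 0] hne₁₀
      ((latticeWidth_triangle_eq_one_iff _).mpr (.inl rfl)) fun _ => one_le_latticeWidth_triangle
  refine ⟨hawMin, hlwMin,
    fun c hc => (aw_triangle_eq_one_iff c).trans (apply_zero_eq_zero_iff_exists_eq_vec hc),
    fun c _ => latticeWidth_triangle_eq_one_iff c, ?_⟩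
  rintro ⟨c, -, haw, hlw⟩
  rw [hawMin, aw_triangle_eq_one_iff] at haw
  rw [hlwMin, latticeWidth_triangle_eq_one_iff] at hlw
  rcases hlw with rfl | rfl <;> simp at haw
end
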